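/- arXiv:math/0308102 — 7 statements merged into one kernel-verified Lean document; each statement's English description precedes it below -/
import Mathlib

section
/- Let V be a finite-dimensional K-subspace of R = K[X_1,...,X_n] and τ a monomial order. Then dim_K V = dim_K in_τ(V). -/
open MvPolynomial

/-- The exponent of the initial monomial of `f` with respect to the monomial order `m`. -/
noncomputable def MonomialOrder.inExp {σ K : Type*} [CommSemiring K] (m : MonomialOrder σ)
    (f : MvPolynomial σ K) : σ →₀ ℕ :=
  m.toSyn.symm (f.support.sup m.toSyn)

/-- The set `M(V)` of initial monomials of nonzero elements of `V`. -/
def iniMonomials {K : Type*} [Field K] {n : ℕ} (m : MonomialOrder (Fin n))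
    (V : Submodule K (MvPolynomial (Fin n) K)) : Set (MvPolynomial (Fin n) K) :=
  {q | ∃ f ∈ V, f ≠ 0 ∧ q = monomial (m.inExp f) (1 : K)}

/-- The initial space `in_τ(V)`: the `K`-span of the initial monomials of nonzero elements
of `V`. -/
noncomputable def iniSpace {K : Type*} [Field K] {n : ℕ} (m : MonomialOrder (Fin n))
    (V : Submodule K (MvPolynomial (Fin n) K)) : Submodule K (MvPolynomial (Fin n) K) :=
  Submodule.span K (iniMonomials m V)

section aux

variable {σ K : Type*} [CommSemiring K] (m : MonomialOrder σ)

lemma MonomialOrder.inExp_mem_support {f : MvPolynomial σ K} (hf : f ≠ 0) :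
    m.inExp f ∈ f.support := by
  obtain ⟨e, he, hsup⟩ := Finset.exists_mem_eq_sup f.support
    (MvPolynomial.support_nonempty.mpr hf) m.toSyn
  rw [MonomialOrder.inExp, hsup, AddEquiv.symm_apply_apply]
  exact he

lemma MonomialOrder.coeff_inExp_ne_zero {f : MvPolynomial σ K} (hf : f ≠ 0) :
    f.coeff (m.inExp f) ≠ 0 :=
  MvPolynomial.mem_support_iff.mp (m.inExp_mem_support hf)

lemma MonomialOrder.le_inExp {f : MvPolynomial σ K} {d : σ →₀ ℕ} (hd : d ∈ f.support) :
    m.toSyn d ≤ m.toSyn (m.inExp f) := by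
  rw [MonomialOrder.inExp, AddEquiv.apply_symm_apply]
  exact Finset.le_sup hd

lemma MonomialOrder.coeff_eq_zero_of_lt_inExp {f : MvPolynomial σ K} {d : σ →₀ ℕ}
    (h : m.toSyn (m.inExp f) < m.toSyn d) : f.coeff d = 0 := by
  by_contra hc
  exact absurd (m.le_inExp (MvPolynomial.mem_support_iff.mpr hc)) (not_le.mpr h)

end aux

/-- A finite-dimensional subspace `V` and its initial space `in_τ(V)` have the same
`K`-dimension. -/
theorem finrank_iniSpace {K : Type*} [Field K] {n : ℕ} (m : MonomialOrder (Fin n))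
    (V : Submodule K (MvPolynomial (Fin n) K)) [FiniteDimensional K V] :
    Module.finrank K V = Module.finrank K (iniSpace m V) := by
  classical
  set E : Set (Fin n →₀ ℕ) := {e | ∃ f, f ∈ V ∧ f ≠ 0 ∧ m.inExp f = e} with hE
  have hrep : ∀ e ∈ E, ∃ f, f ∈ V ∧ f ≠ 0 ∧ m.inExp f = e := fun e he => he
  choose rep hrepV hrep0 hrepExp using hrep
  set F : E → MvPolynomial (Fin n) K := fun e => rep e.1 e.2 with hF
  -- linear independence of the representatives
  have hFindep : LinearIndependent K F := by
    rw [linearIndependent_iff']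
    intro s g hsum i hi
    by_contra hgi
    set t := s.filter (fun j => g j ≠ 0) with ht
    have htne : t.Nonempty := ⟨i, Finset.mem_filter.mpr ⟨hi, hgi⟩⟩
    obtain ⟨i0, hi0t, hmax⟩ := t.exists_max_image (fun j => m.toSyn j.1) htne
    obtain ⟨hi0s, hgi0⟩ := Finset.mem_filter.mp hi0t
    have hkey : MvPolynomial.coeff i0.1 (∑ j ∈ s, g j • F j)
        = g i0 * (F i0).coeff i0.1 := by
      rw [MvPolynomial.coeff_sum]
      refine Finset.sum_eq_single i0 (fun j hj hji0 => ?_) (fun h => absurd hi0s h)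
      rw [MvPolynomial.coeff_smul, smul_eq_mul]
      by_cases hgj : g j = 0
      · rw [hgj, zero_mul]
      · have hjt : j ∈ t := Finset.mem_filter.mpr ⟨hj, hgj⟩
        have hlt : m.toSyn j.1 < m.toSyn i0.1 :=
          lt_of_le_of_ne (hmax j hjt)
            (fun hc => hji0 (Subtype.ext (m.toSyn.injective hc)))
        have : (F j).coeff i0.1 = 0 := by
          apply m.coeff_eq_zero_of_lt_inExp
          rw [hF]; rw [hrepExp j.1 j.2]
          exact hlt
        rw [this, mul_zero]
    rw [hsum, MvPolynomial.coeff_zero] at hkey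
    have hc0 : (F i0).coeff i0.1 ≠ 0 := by
      have := m.coeff_inExp_ne_zero (f := F i0) (hrep0 i0.1 i0.2)
      rwa [hF, hrepExp i0.1 i0.2] at this
    exact hc0 (by
      rcases mul_eq_zero.mp hkey.symm with h | h
      · exact absurd h hgi0
      · exact h)
  -- the representatives span V
  have hspan : ∀ f ∈ V, f ∈ Submodule.span K (Set.range F) := by
    have key : ∀ a : m.syn, ∀ f, f ∈ V → m.toSyn (m.inExp f) = a →
        f ∈ Submodule.span K (Set.range F) := by
      intro a
      induction a using WellFoundedLT.induction with
      | ind a ih =>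
        intro f hfV hfa
        by_cases hf0 : f = 0
        · rw [hf0]; exact Submodule.zero_mem _
        · have heE : m.inExp f ∈ E := ⟨f, hfV, hf0, rfl⟩
          set g := rep (m.inExp f) heE with hg
          have hg0 : g ≠ 0 := hrep0 _ heE
          have hgV : g ∈ V := hrepV _ heE
          have hge : m.inExp g = m.inExp f := hrepExp _ heE
          have hgmem : g ∈ Submodule.span K (Set.range F) :=
            Submodule.subset_span ⟨⟨m.inExp f, heE⟩, rfl⟩
          set c := f.coeff (m.inExp f) / g.coeff (m.inExp f) with hc
          by_cases hh0 : f - c • g = 0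
          · rw [sub_eq_zero] at hh0
            rw [hh0]; exact Submodule.smul_mem _ _ hgmem
          · have hhigh : ∀ d, m.toSyn (m.inExp f) ≤ m.toSyn d →
                (f - c • g).coeff d = 0 := by
              intro d hd
              rw [MvPolynomial.coeff_sub, MvPolynomial.coeff_smul, smul_eq_mul]
              rcases eq_or_lt_of_le hd with heq | hlt
              · have hdd : d = m.inExp f := m.toSyn.injective heq.symm
                rw [hdd, hc, div_mul_cancel₀]
                · exact sub_self _
                · have := m.coeff_inExp_ne_zero hg0
                  rwa [hge] at this
              · rw [m.coeff_eq_zero_of_lt_inExp hlt, m.coeff_eq_zero_of_lt_inExp (by rwa [hge]),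
                  mul_zero, sub_zero]
            have hlt : m.toSyn (m.inExp (f - c • g)) < a := by
              rw [← hfa]
              by_contra hnot
              exact m.coeff_inExp_ne_zero hh0 (hhigh _ (not_lt.mp hnot))
            have hhV : f - c • g ∈ V := Submodule.sub_mem _ hfV (Submodule.smul_mem _ _ hgV)
            have hhmem := ih _ hlt (f - c • g) hhV rfl
            have : f = (f - c • g) + c • g := by ring
            rw [this]
            exact Submodule.add_mem _ hhmem (Submodule.smul_mem _ _ hgmem)
    exact fun f hf => key _ f hf rfl
  have hVeq : Submodule.span K (Set.range F) = V := by
    apply le_antisymm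
    · rw [Submodule.span_le]
      rintro _ ⟨e, rfl⟩
      exact hrepV e.1 e.2
    · exact hspan
  -- E is finite
  have hF'indep : LinearIndependent K (fun e : E => (⟨F e, hrepV e.1 e.2⟩ : V)) := by
    apply LinearIndependent.of_comp V.subtype
    exact hFindep
  have hEfin : Finite E := hF'indep.finite
  have : Fintype E := Fintype.ofFinite E
  -- finrank of V
  have h1 : Module.finrank K V = Fintype.card E := by
    rw [← hVeq]
    exact finrank_span_eq_card hFindep
  -- the initial monomials
  have hMon : iniMonomials m V = Set.range (fun e : E => (monomial e.1 (1 : K))) := by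
    ext q
    constructor
    · rintro ⟨f, hfV, hf0, rfl⟩
      exact ⟨⟨m.inExp f, ⟨f, hfV, hf0, rfl⟩⟩, rfl⟩
    · rintro ⟨⟨e, f, hfV, hf0, rfl⟩, rfl⟩
      exact ⟨f, hfV, hf0, rfl⟩
  have hMindep : LinearIndependent K (fun e : E => (monomial e.1 (1 : K))) := by
    have := (MvPolynomial.basisMonomials (Fin n) K).linearIndependent.comp
      (Subtype.val : E → (Fin n →₀ ℕ)) Subtype.val_injective
    rwa [MvPolynomial.coe_basisMonomials] at this
  have h2 : Module.finrank K (iniSpace m V) = Fintype.card E := by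
    rw [iniSpace, hMon]
    exact finrank_span_eq_card hMindep
  rw [h1, h2]
end

section
/- Let V be a K-subspace of R = K[X_1,...,X_n] and let σ, τ be monomial orders. If in_τ(V) ⊆ in_σ(V), then in_τ(V) = in_σ(V). -/
open MvPolynomial

namespace IniAux

variable {K : Type*} [Field K] {n : ℕ}

/-- The set of initial exponents of nonzero elements of `V`. -/
def Eset (m : MonomialOrder (Fin n)) (V : Submodule K (MvPolynomial (Fin n) K)) :
    Set (Fin n →₀ ℕ) :=
  {d | ∃ f ∈ V, f ≠ 0 ∧ m.inExp f = d}

lemma iniMonomials_eq (m : MonomialOrder (Fin n)) (V : Submodule K (MvPolynomial (Fin n) K)) :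
    iniMonomials m V = (fun d => (monomial d (1 : K))) '' Eset m V := by
  ext q
  constructor
  · rintro ⟨f, hf, hf0, rfl⟩
    exact ⟨m.inExp f, ⟨f, hf, hf0, rfl⟩, rfl⟩
  · rintro ⟨d, ⟨f, hf, hf0, rfl⟩, rfl⟩
    exact ⟨f, hf, hf0, rfl⟩

lemma inExp_mem_support (m : MonomialOrder (Fin n)) {f : MvPolynomial (Fin n) K} (hf : f ≠ 0) :
    m.inExp f ∈ f.support := by
  have hne : f.support.Nonempty := MvPolynomial.support_nonempty.mpr hf
  obtain ⟨b, hb, hbs⟩ := Finset.exists_mem_eq_sup f.support hne m.toSyn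
  rw [MonomialOrder.inExp, hbs, AddEquiv.symm_apply_apply]
  exact hb

lemma le_inExp (m : MonomialOrder (Fin n)) {f : MvPolynomial (Fin n) K} {d : Fin n →₀ ℕ}
    (hd : d ∈ f.support) : m.toSyn d ≤ m.toSyn (m.inExp f) := by
  rw [MonomialOrder.inExp, AddEquiv.apply_symm_apply]
  exact Finset.le_sup hd

lemma coeff_eq_zero_of_mem_span {E : Set (Fin n →₀ ℕ)} {p : MvPolynomial (Fin n) K}
    (hp : p ∈ Submodule.span K ((fun d => (monomial d (1 : K))) '' E)) {d : Fin n →₀ ℕ}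
    (hd : d ∉ E) : coeff d p = 0 := by
  induction hp using Submodule.span_induction with
  | mem x hx =>
      obtain ⟨e, he, rfl⟩ := hx
      rw [coeff_monomial]
      split
      · next heq => exact absurd (heq ▸ he) hd
      · rfl
  | zero => simp
  | add x y _ _ hx hy => simp [hx, hy]
  | smul a x _ hx => simp [MvPolynomial.coeff_smul, hx]

/-- The "complement" span: span of monomials whose exponent is not an initial exponent. -/
noncomputable def Cspan (m : MonomialOrder (Fin n)) (V : Submodule K (MvPolynomial (Fin n) K)) :
    Submodule K (MvPolynomial (Fin n) K) :=
  Submodule.span K ((fun d => (monomial d (1 : K))) '' (Eset m V)ᶜ)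

lemma eq_zero_of_mem_inf {m : MonomialOrder (Fin n)} {V : Submodule K (MvPolynomial (Fin n) K)}
    {p : MvPolynomial (Fin n) K} (hpV : p ∈ V) (hpC : p ∈ Cspan m V) : p = 0 := by
  by_contra hp
  have h1 : m.inExp p ∈ Eset m V := ⟨p, hpV, hp, rfl⟩
  have h2 : coeff (m.inExp p) p = 0 :=
    coeff_eq_zero_of_mem_span hpC (by simpa using h1)
  exact absurd h2 (by simpa [MvPolynomial.mem_support_iff] using inExp_mem_support m hp)

lemma lt_of_coeff_zero {m : MonomialOrder (Fin n)} {q : MvPolynomial (Fin n) K}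
    {d : Fin n →₀ ℕ} (h0 : coeff d q = 0)
    (hle : ∀ d' ∈ q.support, m.toSyn d' ≤ m.toSyn d) :
    ∀ d' ∈ q.support, m.toSyn d' < m.toSyn d := by
  intro d' hd'
  refine lt_of_le_of_ne (hle d' hd') ?_
  intro heq
  have : d' = d := m.toSyn.injective heq
  subst this
  exact (MvPolynomial.mem_support_iff.mp hd') h0

lemma mem_sup_aux (m : MonomialOrder (Fin n)) (V : Submodule K (MvPolynomial (Fin n) K)) :
    ∀ a : m.syn, ∀ p : MvPolynomial (Fin n) K,
      m.toSyn (m.inExp p) = a → p ∈ V ⊔ Cspan m V := by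
  intro a
  induction a using WellFoundedLT.induction with
  | _ a ih =>
    intro p hpa
    by_cases hp : p = 0
    · simp [hp]
    have hdsupp : m.inExp p ∈ p.support := inExp_mem_support m hp
    set d := m.inExp p with hd
    by_cases hdE : d ∈ Eset m V
    · obtain ⟨g, hgV, hg0, hgd⟩ := hdE
      have hgsupp : m.inExp g ∈ g.support := inExp_mem_support m hg0
      have hgc : coeff d g ≠ 0 := by
        rw [← hgd]; exact MvPolynomial.mem_support_iff.mp hgsupp
      set c : K := coeff d p / coeff d g with hc
      set p' : MvPolynomial (Fin n) K := p - c • g with hp'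
      have hcoeff0 : coeff d p' = 0 := by
        simp [hp', hc, MvPolynomial.coeff_smul, div_mul_cancel₀ _ hgc]
      have hle : ∀ d' ∈ p'.support, m.toSyn d' ≤ m.toSyn d := by
        intro d' hd'
        have hne : coeff d' p' ≠ 0 := MvPolynomial.mem_support_iff.mp hd'
        have : coeff d' p ≠ 0 ∨ coeff d' g ≠ 0 := by
          by_contra hcon
          push_neg at hcon
          apply hne
          simp [hp', MvPolynomial.coeff_smul, hcon.1, hcon.2]
        rcases this with h' | h'
        · rw [hd]; exact le_inExp m (MvPolynomial.mem_support_iff.mpr h')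
        · calc m.toSyn d' ≤ m.toSyn (m.inExp g) := le_inExp m (MvPolynomial.mem_support_iff.mpr h')
            _ = m.toSyn d := by rw [hgd]
      have hlt := lt_of_coeff_zero hcoeff0 hle
      have hp'mem : p' ∈ V ⊔ Cspan m V := by
        by_cases h0 : p' = 0
        · simp [h0]
        · exact ih _ (hpa ▸ hlt _ (inExp_mem_support m h0)) p' rfl
      have hsplit : p = p' + c • g := by rw [hp']; ring
      rw [hsplit]
      exact Submodule.add_mem _ hp'mem (Submodule.mem_sup_left (Submodule.smul_mem _ _ hgV))
    · set p' : MvPolynomial (Fin n) K := p - monomial d (coeff d p) with hp'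
      have hcoeff0 : coeff d p' = 0 := by simp [hp', coeff_monomial]
      have hle : ∀ d' ∈ p'.support, m.toSyn d' ≤ m.toSyn d := by
        intro d' hd'
        have hne : coeff d' p' ≠ 0 := MvPolynomial.mem_support_iff.mp hd'
        have hne' : d' ≠ d := by
          intro heq; exact hne (heq ▸ hcoeff0)
        have : coeff d' p ≠ 0 := by
          intro h0
          apply hne
          rw [hp', MvPolynomial.coeff_sub, coeff_monomial,
            if_neg (fun heq => hne' heq.symm), h0, sub_zero]
        rw [hd]
        exact le_inExp m (MvPolynomial.mem_support_iff.mpr this)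
      have hlt := lt_of_coeff_zero hcoeff0 hle
      have hp'mem : p' ∈ V ⊔ Cspan m V := by
        by_cases h0 : p' = 0
        · simp [h0]
        · exact ih _ (hpa ▸ hlt _ (inExp_mem_support m h0)) p' rfl
      have hmon : monomial d (coeff d p) ∈ Cspan m V := by
        have h1 : monomial d (1 : K) ∈ Cspan m V :=
          Submodule.subset_span ⟨d, hdE, rfl⟩
        have : monomial d (coeff d p) = (coeff d p) • monomial d (1 : K) := by
          rw [MvPolynomial.smul_monomial, smul_eq_mul, mul_one]
        rw [this]
        exact Submodule.smul_mem _ _ h1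
      have hsplit : p = p' + monomial d (coeff d p) := by rw [hp']; ring
      rw [hsplit]
      exact Submodule.add_mem _ hp'mem (Submodule.mem_sup_right hmon)

lemma sup_eq_top (m : MonomialOrder (Fin n)) (V : Submodule K (MvPolynomial (Fin n) K)) :
    V ⊔ Cspan m V = ⊤ := by
  rw [eq_top_iff]
  intro p _
  exact mem_sup_aux m V _ p rfl

end IniAux

/-- If `σ, τ` are monomial orders with `in_τ(V) ⊆ in_σ(V)`, then `in_τ(V) = in_σ(V)`. -/
theorem iniSpace_eq_of_le {K : Type*} [Field K] {n : ℕ} (mτ mσ : MonomialOrder (Fin n))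
    (V : Submodule K (MvPolynomial (Fin n) K))
    (h : iniSpace mτ V ≤ iniSpace mσ V) : iniSpace mτ V = iniSpace mσ V := by
  open IniAux in
  have hE : Eset mτ V ⊆ Eset mσ V := by
    rintro d ⟨f, hf, hf0, rfl⟩
    have h1 : monomial (mτ.inExp f) (1 : K) ∈ iniSpace mτ V :=
      Submodule.subset_span ⟨f, hf, hf0, rfl⟩
    have h2 := h h1
    rw [iniSpace, iniMonomials_eq] at h2
    by_contra hdE
    have := coeff_eq_zero_of_mem_span h2 hdE
    simp [coeff_monomial] at this
  have hCσ : Cspan mσ V ≤ Cspan mτ V :=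
    Submodule.span_mono (Set.image_mono (Set.compl_subset_compl.mpr hE))
  have hCτ : Cspan mτ V ≤ Cspan mσ V := by
    intro x hx
    have hx' : x ∈ V ⊔ Cspan mσ V := by rw [sup_eq_top]; trivial
    obtain ⟨v, hv, c, hc, rfl⟩ := Submodule.mem_sup.mp hx'
    have hvC : v ∈ Cspan mτ V := by
      have : v = (v + c) - c := by ring
      rw [this]
      exact Submodule.sub_mem _ hx (hCσ hc)
    have hv0 : v = 0 := eq_zero_of_mem_inf hv hvC
    rw [hv0, zero_add]
    exact hc
  have hE2 : Eset mσ V ⊆ Eset mτ V := by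
    intro d hd
    by_contra hdE
    have h1 : monomial d (1 : K) ∈ Cspan mτ V := Submodule.subset_span ⟨d, hdE, rfl⟩
    have := coeff_eq_zero_of_mem_span (hCτ h1) (by simpa using hd)
    simp [coeff_monomial] at this
  have hEeq : Eset mτ V = Eset mσ V := le_antisymm hE hE2
  rw [iniSpace, iniSpace, iniMonomials_eq, iniMonomials_eq, hEeq]
end

section
/- Let A = K[X+Y, XY, XY²] ⊆ K[X,Y] and let τ be a monomial order with X > Y. Then the initial algebra in_τ(A) equals K[X, XY, XY², XY³, ...], the algebra generated by all monomials XY^k with k ≥ 0, and this algebra is not finitely generated as a K-algebra. -/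
open MvPolynomial

open Pointwise

namespace MonomialOrder
variable {σ R : Type*} [CommSemiring R] (m : MonomialOrder σ)

lemma inExp_mem_support_s10 {f : MvPolynomial σ R} (hf : f ≠ 0) : m.inExp f ∈ f.support := by
  obtain ⟨d, hd, he⟩ := Finset.exists_mem_eq_sup _
    (Finset.nonempty_iff_ne_empty.mpr (fun h => hf (support_eq_empty.mp h))) m.toSyn
  unfold MonomialOrder.inExp
  rw [he, AddEquiv.symm_apply_apply]
  exact hd

lemma le_inExp_s10 {f : MvPolynomial σ R} {d : σ →₀ ℕ} (hd : d ∈ f.support) :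
    m.toSyn d ≤ m.toSyn (m.inExp f) := by
  unfold MonomialOrder.inExp
  rw [AddEquiv.apply_symm_apply]
  exact Finset.le_sup hd

lemma inExp_eq_of {f : MvPolynomial σ R} {d : σ →₀ ℕ} (hd : d ∈ f.support)
    (h : ∀ e ∈ f.support, m.toSyn e ≤ m.toSyn d) : m.inExp f = d := by
  apply m.toSyn.injective
  unfold MonomialOrder.inExp
  rw [AddEquiv.apply_symm_apply]
  exact le_antisymm (Finset.sup_le h) (Finset.le_sup hd)

lemma inExp_monomial {d : σ →₀ ℕ} {c : R} (hc : c ≠ 0) :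
    m.inExp (monomial d c) = d := by
  classical
  apply m.inExp_eq_of
  · rw [mem_support_iff, coeff_monomial, if_pos rfl]; exact hc
  · intro e he
    rw [mem_support_iff, coeff_monomial] at he
    by_cases h : d = e
    · exact le_of_eq (congrArg _ h.symm)
    · simp [h] at he

lemma inExp_one [Nontrivial R] : m.inExp (1 : MvPolynomial σ R) = 0 := by
  have h := m.inExp_monomial (d := (0 : σ →₀ ℕ)) (c := (1 : R)) one_ne_zero
  rwa [monomial_zero', C_1] at h

variable {K : Type*} [Field K]

lemma coeff_inExp_mul {f g : MvPolynomial σ K} (hf : f ≠ 0) (hg : g ≠ 0) :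
    coeff (m.inExp f + m.inExp g) (f * g) = coeff (m.inExp f) f * coeff (m.inExp g) g := by
  classical
  have hmem : (m.inExp f, m.inExp g) ∈ Finset.HasAntidiagonal.antidiagonal (m.inExp f + m.inExp g) :=
    Finset.HasAntidiagonal.mem_antidiagonal.mpr rfl
  rw [coeff_mul, Finset.sum_eq_single (m.inExp f, m.inExp g)]
  · intro b hb hne
    rw [Finset.HasAntidiagonal.mem_antidiagonal] at hb
    by_cases h1 : coeff b.1 f = 0
    · rw [h1, zero_mul]
    by_cases h2 : coeff b.2 g = 0
    · rw [h2, mul_zero]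
    exfalso
    have hb1 := m.le_inExp_s10 (mem_support_iff.mpr h1)
    have hb2 := m.le_inExp_s10 (mem_support_iff.mpr h2)
    have hsum : m.toSyn b.1 + m.toSyn b.2 = m.toSyn (m.inExp f) + m.toSyn (m.inExp g) := by
      rw [← map_add, ← map_add, hb]
    have e1 : m.toSyn b.1 = m.toSyn (m.inExp f) := by
      by_contra h
      exact absurd hsum (ne_of_lt (add_lt_add_of_lt_of_le (lt_of_le_of_ne hb1 h) hb2))
    have e2 : m.toSyn b.2 = m.toSyn (m.inExp g) := by
      rw [e1] at hsum
      exact add_left_cancel hsum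
    exact hne (Prod.ext (m.toSyn.injective e1) (m.toSyn.injective e2))
  · intro h
    exact absurd hmem h

lemma inExp_mul {f g : MvPolynomial σ K} (hf : f ≠ 0) (hg : g ≠ 0) :
    m.inExp (f * g) = m.inExp f + m.inExp g := by
  classical
  apply m.inExp_eq_of
  · rw [mem_support_iff, m.coeff_inExp_mul hf hg]
    exact mul_ne_zero (mem_support_iff.mp (m.inExp_mem_support_s10 hf))
      (mem_support_iff.mp (m.inExp_mem_support_s10 hg))
  · intro e he
    obtain ⟨u, hu, v, hv, rfl⟩ := Finset.mem_add.mp (support_mul f g he)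
    rw [map_add, map_add]
    exact add_le_add (m.le_inExp_s10 hu) (m.le_inExp_s10 hv)

lemma inExp_pow {f : MvPolynomial σ K} (hf : f ≠ 0) (n : ℕ) :
    m.inExp (f ^ n) = n • m.inExp f := by
  induction n with
  | zero => simpa using m.inExp_one
  | succ k ih =>
    rw [pow_succ, m.inExp_mul (pow_ne_zero _ hf) hf, ih, succ_nsmul]

end MonomialOrder


section Fin2
variable {K : Type*} [Field K]

lemma fin2_decomp (d : Fin 2 →₀ ℕ) :
    d = Finsupp.single 0 (d 0) + Finsupp.single 1 (d 1) := by
  ext i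
  fin_cases i <;> simp [Finsupp.single_apply]

lemma monomial_fin2 (d : Fin 2 →₀ ℕ) (c : K) :
    monomial d c = C c * X 0 ^ (d 0) * X 1 ^ (d 1) := by
  rw [monomial_eq, Finsupp.prod_fintype _ _ (fun i => pow_zero _), Fin.prod_univ_two, mul_assoc]

lemma single_lt_single (m : MonomialOrder (Fin 2))
    (hXY : m.toSyn (Finsupp.single (1 : Fin 2) 1) < m.toSyn (Finsupp.single (0 : Fin 2) 1))
    {b : ℕ} (hb : b ≠ 0) :
    m.toSyn (Finsupp.single (1 : Fin 2) b) < m.toSyn (Finsupp.single (0 : Fin 2) b) := by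
  induction b with
  | zero => exact absurd rfl hb
  | succ n ih =>
    rcases Nat.eq_zero_or_pos n with h | h
    · subst h; simpa using hXY
    · have h1 : (Finsupp.single (1 : Fin 2) (n + 1)) =
        Finsupp.single 1 n + Finsupp.single 1 1 := by rw [← Finsupp.single_add]
      have h0 : (Finsupp.single (0 : Fin 2) (n + 1)) =
        Finsupp.single 0 n + Finsupp.single 0 1 := by rw [← Finsupp.single_add]
      rw [h1, h0, map_add, map_add]
      exact add_lt_add (ih h.ne') hXY

lemma X_add_X_ne_zero : (X 0 + X 1 : MvPolynomial (Fin 2) K) ≠ 0 := by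
  intro h
  have := congrArg (coeff (Finsupp.single 0 1)) h
  simp [coeff_X', Finsupp.single_eq_single_iff] at this

lemma inExp_X_add_X (m : MonomialOrder (Fin 2))
    (hXY : m.toSyn (Finsupp.single (1 : Fin 2) 1) < m.toSyn (Finsupp.single (0 : Fin 2) 1)) :
    m.inExp (X 0 + X 1 : MvPolynomial (Fin 2) K) = Finsupp.single 0 1 := by
  classical
  apply m.inExp_eq_of
  · rw [mem_support_iff]
    simp [coeff_X', Finsupp.single_eq_single_iff]
  · intro e he
    have hsub : (X 0 + X 1 : MvPolynomial (Fin 2) K).support ⊆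
        (X 0 : MvPolynomial (Fin 2) K).support ∪ (X 1).support := support_add
    have := hsub he
    rw [support_X, support_X, Finset.mem_union, Finset.mem_singleton, Finset.mem_singleton] at this
    rcases this with rfl | rfl
    · exact le_refl _
    · exact hXY.le

lemma X_mul_pow_eq (b : ℕ) :
    (X 0 * X 1 ^ b : MvPolynomial (Fin 2) K) =
      monomial (Finsupp.single 0 1 + Finsupp.single 1 b) 1 := by
  have hX : (X 0 : MvPolynomial (Fin 2) K) = monomial (Finsupp.single 0 1) 1 := rfl
  rw [hX, X_pow_eq_monomial, monomial_mul, one_mul]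

end Fin2

section Algebras
variable {K : Type*} [Field K]

lemma XYpow_mem_A (k : ℕ) (hk : k ≠ 0) :
    (X 0 * X 1 ^ k : MvPolynomial (Fin 2) K) ∈
      Algebra.adjoin K {X (0 : Fin 2) + X 1, X 0 * X 1, X 0 * (X 1) ^ 2} := by
  set A := Algebra.adjoin K
    {X (0 : Fin 2) + X 1, X 0 * X 1, X 0 * (X 1 : MvPolynomial (Fin 2) K) ^ 2} with hA
  have hg1 : (X 0 + X 1 : MvPolynomial (Fin 2) K) ∈ A := Algebra.subset_adjoin (by simp)
  have hg2 : (X 0 * X 1 : MvPolynomial (Fin 2) K) ∈ A := Algebra.subset_adjoin (by simp)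
  have hg3 : (X 0 * X 1 ^ 2 : MvPolynomial (Fin 2) K) ∈ A := Algebra.subset_adjoin (by simp)
  have H : ∀ n : ℕ, (X 0 * X 1 ^ (n + 1) : MvPolynomial (Fin 2) K) ∈ A ∧
      (X 0 * X 1 ^ (n + 2) : MvPolynomial (Fin 2) K) ∈ A := by
    intro n
    induction n with
    | zero => exact ⟨by simpa using hg2, hg3⟩
    | succ p ih =>
      refine ⟨ih.2, ?_⟩
      have key : (X 0 * X 1 ^ (p + 1 + 2) : MvPolynomial (Fin 2) K) =
          (X 0 * X 1 ^ (p + 2)) * (X 0 + X 1) - (X 0 * X 1 ^ (p + 1)) * (X 0 * X 1) := by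
        ring
      rw [key]
      exact sub_mem (mul_mem ih.2 hg1) (mul_mem ih.1 hg2)
  obtain ⟨n, rfl⟩ := Nat.exists_eq_succ_of_ne_zero hk
  exact (H n).1

lemma support_cond_of_mem_B {f : MvPolynomial (Fin 2) K}
    (hf : f ∈ Algebra.adjoin K {p : MvPolynomial (Fin 2) K | ∃ k : ℕ, p = X 0 * (X 1) ^ k}) :
    ∀ d ∈ f.support, d 0 = 0 → d = 0 := by
  classical
  induction hf using Algebra.adjoin_induction with
  | mem p hp =>
    obtain ⟨k, rfl⟩ := hp
    intro d hd h0
    rw [X_mul_pow_eq, support_monomial, if_neg one_ne_zero, Finset.mem_singleton] at hd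
    subst hd
    simp [Finsupp.single_apply] at h0
  | algebraMap r =>
    intro d hd _
    rw [mem_support_iff, MvPolynomial.algebraMap_eq, coeff_C] at hd
    by_contra hne
    rw [if_neg (fun h => hne h.symm)] at hd
    exact hd rfl
  | add x y hx hy ihx ihy =>
    intro d hd h0
    rcases Finset.mem_union.mp (support_add hd) with h | h
    · exact ihx d h h0
    · exact ihy d h h0
  | mul x y hx hy ihx ihy =>
    intro d hd h0
    obtain ⟨u, hu, v, hv, rfl⟩ := Finset.mem_add.mp (support_mul x y hd)
    have h0' : u 0 + v 0 = 0 := h0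
    have hu0 : u = 0 := ihx u hu (by omega)
    have hv0 : v = 0 := ihy v hv (by omega)
    rw [hu0, hv0, add_zero]

lemma monomial_mem_B {d : Fin 2 →₀ ℕ} (hd : d 0 ≠ 0) (c : K) :
    monomial d c ∈
      Algebra.adjoin K {p : MvPolynomial (Fin 2) K | ∃ k : ℕ, p = X 0 * (X 1) ^ k} := by
  set B := Algebra.adjoin K {p : MvPolynomial (Fin 2) K | ∃ k : ℕ, p = X 0 * (X 1) ^ k} with hB
  obtain ⟨n, hn⟩ : ∃ n, d 0 = n + 1 := ⟨d 0 - 1, by omega⟩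
  have key : monomial d c = C c * ((X 0 * X 1 ^ (d 1)) * (X 0 * X 1 ^ 0) ^ n) := by
    rw [monomial_fin2, hn]
    ring
  rw [key]
  have m1 : (X 0 * X 1 ^ (d 1) : MvPolynomial (Fin 2) K) ∈ B :=
    Algebra.subset_adjoin (Set.mem_setOf_eq ▸ ⟨d 1, rfl⟩)
  have m0 : (X 0 * X 1 ^ 0 : MvPolynomial (Fin 2) K) ∈ B :=
    Algebra.subset_adjoin (Set.mem_setOf_eq ▸ ⟨0, rfl⟩)
  exact mul_mem ((Algebra.adjoin K _).algebraMap_mem c) (mul_mem m1 (pow_mem m0 n))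

lemma mem_B_of_support {f : MvPolynomial (Fin 2) K}
    (h : ∀ d ∈ f.support, d 0 = 0 → d = 0) :
    f ∈ Algebra.adjoin K {p : MvPolynomial (Fin 2) K | ∃ k : ℕ, p = X 0 * (X 1) ^ k} := by
  rw [f.as_sum]
  apply Subalgebra.sum_mem
  intro d hd
  by_cases h0 : d 0 = 0
  · have := h d hd h0
    subst this
    rw [monomial_zero']
    exact (Algebra.adjoin K _).algebraMap_mem _
  · exact monomial_mem_B h0 _

end Algebras

section Aevals
variable {K : Type*} [Field K]

lemma coeff_aeval_X1 (f : MvPolynomial (Fin 2) K) (b : ℕ) :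
    coeff (Finsupp.single (1 : Fin 2) b)
        (aeval (![0, X 1] : Fin 2 → MvPolynomial (Fin 2) K) f) =
      coeff (Finsupp.single 1 b) f := by
  classical
  conv_lhs => rw [f.as_sum]
  conv_rhs => rw [f.as_sum]
  rw [map_sum, MvPolynomial.coeff_sum, MvPolynomial.coeff_sum]
  apply Finset.sum_congr rfl
  intro d _
  rw [monomial_fin2, map_mul, map_mul, map_pow, map_pow, aeval_X, aeval_X, aeval_C]
  simp only [Matrix.cons_val_zero, Matrix.cons_val_one, Matrix.head_cons]
  by_cases h0 : d 0 = 0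
  · rw [h0]
    simp [algebraMap_eq]
  · rw [zero_pow h0, mul_zero, zero_mul, coeff_zero, ← monomial_fin2,
      coeff_monomial, if_neg]
    intro h
    apply h0
    rw [h]
    simp [Finsupp.single_apply]

lemma coeff_aeval_X0 (f : MvPolynomial (Fin 2) K) (b : ℕ) :
    coeff (Finsupp.single (0 : Fin 2) b)
        (aeval (![X 0, 0] : Fin 2 → MvPolynomial (Fin 2) K) f) =
      coeff (Finsupp.single 0 b) f := by
  classical
  conv_lhs => rw [f.as_sum]
  conv_rhs => rw [f.as_sum]
  rw [map_sum, MvPolynomial.coeff_sum, MvPolynomial.coeff_sum]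
  apply Finset.sum_congr rfl
  intro d _
  rw [monomial_fin2, map_mul, map_mul, map_pow, map_pow, aeval_X, aeval_X, aeval_C]
  simp only [Matrix.cons_val_zero, Matrix.cons_val_one, Matrix.head_cons]
  by_cases h1 : d 1 = 0
  · rw [h1]
    simp [algebraMap_eq]
  · rw [zero_pow h1, mul_zero, coeff_zero, ← monomial_fin2,
      coeff_monomial, if_neg]
    intro h
    apply h1
    rw [h]
    simp [Finsupp.single_apply]

end Aevals

section NoPureY
variable {K : Type*} [Field K]

lemma no_pure_Y (m : MonomialOrder (Fin 2))
    (hXY : m.toSyn (Finsupp.single (1 : Fin 2) 1) < m.toSyn (Finsupp.single (0 : Fin 2) 1))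
    {f : MvPolynomial (Fin 2) K}
    (hfA : f ∈ Algebra.adjoin K {X (0 : Fin 2) + X 1, X 0 * X 1, X 0 * (X 1) ^ 2})
    (hf0 : f ≠ 0) {b : ℕ} (hb : b ≠ 0)
    (hd : m.inExp f = Finsupp.single 1 b) : False := by
  classical
  have h1 : coeff (Finsupp.single (1 : Fin 2) b) f ≠ 0 := by
    rw [← hd]
    exact mem_support_iff.mp (m.inExp_mem_support_s10 hf0)
  have h2 : coeff (Finsupp.single (0 : Fin 2) b) f = 0 := by
    by_contra h
    have hm := m.le_inExp_s10 (mem_support_iff.mpr h)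
    rw [hd] at hm
    exact absurd hm (not_le.mpr (single_lt_single m hXY hb))
  set s : Set (MvPolynomial (Fin 2) K) :=
    {X (0 : Fin 2) + X 1, X 0 * X 1, X 0 * (X 1) ^ 2} with hs
  rw [show Algebra.adjoin K {X (0 : Fin 2) + X 1, X 0 * X 1,
      X 0 * (X 1 : MvPolynomial (Fin 2) K) ^ 2} = Algebra.adjoin K s from rfl,
    Algebra.adjoin_eq_range] at hfA
  obtain ⟨P, hP⟩ := (AlgHom.mem_range _).mp hfA
  have hfun : (fun i : s => rename (Equiv.swap (0 : Fin 2) 1)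
        (aeval (![0, X 1] : Fin 2 → MvPolynomial (Fin 2) K) (i : MvPolynomial (Fin 2) K))) =
      fun i : s => aeval (![X 0, 0] : Fin 2 → MvPolynomial (Fin 2) K)
        (i : MvPolynomial (Fin 2) K) := by
    funext x
    obtain ⟨v, hv⟩ := x
    simp only [hs, Set.mem_insert_iff, Set.mem_singleton_iff] at hv
    rcases hv with rfl | rfl | rfl <;>
      simp [Equiv.swap_apply_left, Equiv.swap_apply_right]
  have step1 := comp_aeval_apply (f := ((↑) : s → MvPolynomial (Fin 2) K))
    (aeval (![0, X 1] : Fin 2 → MvPolynomial (Fin 2) K)) P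
  have step2 := comp_aeval_apply
    (f := fun i : s => aeval (![0, X 1] : Fin 2 → MvPolynomial (Fin 2) K)
      (i : MvPolynomial (Fin 2) K))
    (rename (Equiv.swap (0 : Fin 2) 1)) P
  have step4 := comp_aeval_apply (f := ((↑) : s → MvPolynomial (Fin 2) K))
    (aeval (![X 0, 0] : Fin 2 → MvPolynomial (Fin 2) K)) P
  have key : rename (Equiv.swap (0 : Fin 2) 1)
      (aeval (![0, X 1] : Fin 2 → MvPolynomial (Fin 2) K) f) =
      aeval (![X 0, 0] : Fin 2 → MvPolynomial (Fin 2) K) f := by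
    rw [← hP]
    exact (congrArg (rename (Equiv.swap (0 : Fin 2) 1)) step1).trans
      (step2.trans ((congrArg (fun g => aeval g P) hfun).trans step4.symm))
  have c1 : coeff (Finsupp.single (0 : Fin 2) b)
      (rename (Equiv.swap (0 : Fin 2) 1)
        (aeval (![0, X 1] : Fin 2 → MvPolynomial (Fin 2) K) f)) =
      coeff (Finsupp.single (1 : Fin 2) b) f := by
    have hmap : Finsupp.single (0 : Fin 2) b =
        Finsupp.mapDomain (Equiv.swap (0 : Fin 2) 1) (Finsupp.single 1 b) := by
      rw [Finsupp.mapDomain_single, Equiv.swap_apply_right]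
    rw [hmap, coeff_rename_mapDomain _ (Equiv.injective _), coeff_aeval_X1]
  rw [key, coeff_aeval_X0] at c1
  exact h1 (by rw [← c1]; exact h2)

end NoPureY

/-- For `A = K[X+Y, XY, XY²] ⊆ K[X,Y]` and a monomial order with `X > Y`, the initial
algebra `in_τ(A)` equals the algebra generated by the monomials `X·Y^k`, `k ≥ 0`, and this
algebra is not finitely generated. -/
theorem initial_algebra_not_finitely_generated {K : Type*} [Field K]
    (m : MonomialOrder (Fin 2))
    (hXY : m.toSyn (Finsupp.single (1 : Fin 2) 1) < m.toSyn (Finsupp.single (0 : Fin 2) 1))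
    (A : Subalgebra K (MvPolynomial (Fin 2) K))
    (hA : A = Algebra.adjoin K
      {X (0 : Fin 2) + X 1, X 0 * X 1, X 0 * (X 1) ^ 2}) :
    iniSpace m (Subalgebra.toSubmodule A) =
      Subalgebra.toSubmodule
        (Algebra.adjoin K {p : MvPolynomial (Fin 2) K | ∃ k : ℕ, p = X 0 * (X 1) ^ k}) ∧
    ¬ (Algebra.adjoin K
        {p : MvPolynomial (Fin 2) K | ∃ k : ℕ, p = X 0 * (X 1) ^ k}).FG := by
  classical
  subst hA
  constructor
  · apply le_antisymm
    · rw [iniSpace, Submodule.span_le]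
      rintro q ⟨f, hfA, hf0, rfl⟩
      rw [Subalgebra.mem_toSubmodule] at hfA
      simp only [SetLike.mem_coe, Subalgebra.mem_toSubmodule]
      apply mem_B_of_support
      intro d hd h0
      rw [support_monomial, if_neg one_ne_zero, Finset.mem_singleton] at hd
      subst hd
      by_contra hne
      have hb : (m.inExp f) 1 ≠ 0 := by
        intro h1'
        apply hne
        rw [fin2_decomp (m.inExp f), h0, h1']
        simp
      exact no_pure_Y m hXY hfA hf0 hb (by rw [fin2_decomp (m.inExp f), h0]; simp)
    · intro f hf
      rw [Subalgebra.mem_toSubmodule] at hf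
      have hsup := support_cond_of_mem_B hf
      rw [f.as_sum]
      apply Submodule.sum_mem
      intro d hd
      have hsm : monomial d (coeff d f) = (coeff d f) • monomial d (1 : K) := by
        rw [smul_monomial, smul_eq_mul, mul_one]
      rw [hsm]
      apply Submodule.smul_mem
      apply Submodule.subset_span
      by_cases h0 : d 0 = 0
      · have hd0 : d = 0 := hsup d hd h0
        subst hd0
        exact ⟨1, (Subalgebra.mem_toSubmodule _).mpr (one_mem _), one_ne_zero,
          by rw [m.inExp_one]⟩
      · by_cases hb : d 1 = 0
        · have hE : m.inExp ((X 0 + X 1 : MvPolynomial (Fin 2) K) ^ (d 0)) = d := by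
            rw [m.inExp_pow X_add_X_ne_zero, inExp_X_add_X m hXY]
            ext i
            fin_cases i <;> simp [Finsupp.single_apply, hb]
          exact ⟨(X 0 + X 1) ^ (d 0),
            (Subalgebra.mem_toSubmodule _).mpr
              (pow_mem (Algebra.subset_adjoin (by simp)) _),
            pow_ne_zero _ X_add_X_ne_zero, by rw [hE]⟩
        · have hne1 : (X 0 * X 1 ^ (d 1) : MvPolynomial (Fin 2) K) ≠ 0 := by
            rw [X_mul_pow_eq]
            intro h
            exact one_ne_zero (monomial_eq_zero.mp h)
          have hE : m.inExp ((X 0 * X 1 ^ (d 1)) * (X 0 + X 1) ^ (d 0 - 1)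
              : MvPolynomial (Fin 2) K) = d := by
            rw [m.inExp_mul hne1 (pow_ne_zero _ X_add_X_ne_zero),
              m.inExp_pow X_add_X_ne_zero, inExp_X_add_X m hXY, X_mul_pow_eq,
              m.inExp_monomial one_ne_zero]
            ext i
            fin_cases i <;> simp [Finsupp.single_apply] <;> omega
          exact ⟨(X 0 * X 1 ^ (d 1)) * (X 0 + X 1) ^ (d 0 - 1),
            (Subalgebra.mem_toSubmodule _).mpr
              (mul_mem (XYpow_mem_A _ hb)
                (pow_mem (Algebra.subset_adjoin (by simp)) _)),
            mul_ne_zero hne1 (pow_ne_zero _ X_add_X_ne_zero), by rw [hE]⟩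
  · rintro ⟨t, ht⟩
    set N := (t.sup totalDegree) + 1 with hN
    set dN : Fin 2 →₀ ℕ := Finsupp.single 0 1 + Finsupp.single 1 N with hdN
    set W : Submodule K (MvPolynomial (Fin 2) K) :=
      Submodule.span K ({1} ∪ (t : Set (MvPolynomial (Fin 2) K))) ⊔
        (Ideal.span {(X 0 : MvPolynomial (Fin 2) K) ^ 2}).restrictScalars K with hW
    have htB : ∀ g ∈ t, ∀ d ∈ (g : MvPolynomial (Fin 2) K).support, d 0 = 0 → d = 0 := by
      intro g hg
      exact support_cond_of_mem_B (ht ▸ Algebra.subset_adjoin hg)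
    have memX0 : ∀ z : MvPolynomial (Fin 2) K, (∀ d ∈ z.support, d 0 ≠ 0) →
        z ∈ Ideal.span {(X 0 : MvPolynomial (Fin 2) K)} := by
      intro z hz
      rw [z.as_sum]
      apply Submodule.sum_mem
      intro d hd
      have h0 := hz d hd
      have heq : monomial d (coeff d z) =
          X 0 * monomial (d - Finsupp.single 0 1) (coeff d z) := by
        have hX : (X 0 : MvPolynomial (Fin 2) K) = monomial (Finsupp.single 0 1) 1 := rfl
        have harg : Finsupp.single 0 1 + (d - Finsupp.single 0 1) = d := by
          ext i
          fin_cases i <;> simp [Finsupp.single_apply] <;> omega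
        rw [hX, monomial_mul, one_mul, harg]
      rw [heq]
      exact Ideal.mul_mem_right _ _ (Ideal.subset_span rfl)
    have hdec : ∀ g ∈ t, ∃ u : MvPolynomial (Fin 2) K,
        u * X 0 = g - C (coeff 0 g) := by
      intro g hg
      apply Ideal.mem_span_singleton'.mp
      apply memX0
      intro d hd
      intro hd0
      rw [mem_support_iff] at hd
      apply hd
      by_cases hdz : d = 0
      · subst hdz; simp
      · have : coeff d g = 0 := by
          by_contra hc
          exact hdz (htB g hg d (mem_support_iff.mpr hc) hd0)
        rw [coeff_sub, this, coeff_C, if_neg (fun h => hdz h.symm), sub_zero]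
    have hprod : ∀ g ∈ t, ∀ h ∈ t, g * h ∈ W := by
      intro g hg h hh
      obtain ⟨u, hu⟩ := hdec g hg
      obtain ⟨v, hv⟩ := hdec h hh
      set cg := coeff 0 g with hcg
      set ch := coeff 0 h with hch
      have hg' : g = C cg + u * X 0 := by rw [hu]; ring
      have hh' : h = C ch + v * X 0 := by rw [hv]; ring
      have expand : g * h = C cg * h + (C ch * g - C ch * C cg) + (u * v) * X 0 ^ 2 := by
        conv_lhs => rw [hg', hh']
        conv_rhs => rw [hg', hh']
        ring
      rw [expand]
      refine Submodule.add_mem _ (Submodule.add_mem _ ?_ ?_) ?_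
      · rw [C_mul']
        exact Submodule.mem_sup_left (Submodule.smul_mem _ _
          (Submodule.subset_span (Set.mem_union_right _ hh)))
      · apply Submodule.mem_sup_left
        apply Submodule.sub_mem
        · rw [C_mul']
          exact Submodule.smul_mem _ _ (Submodule.subset_span (Set.mem_union_right _ hg))
        · rw [← C_mul, ← mul_one (C (ch * cg)), C_mul']
          exact Submodule.smul_mem _ _ (Submodule.subset_span (Set.mem_union_left _ rfl))
      · exact Submodule.mem_sup_right (Ideal.mem_span_singleton'.mpr ⟨u * v, rfl⟩)
    have hspan_le_W : Submodule.span K ({1} ∪ (t : Set (MvPolynomial (Fin 2) K))) ≤ W :=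
      le_sup_left
    have hSS : ∀ x ∈ Submodule.span K ({1} ∪ (t : Set (MvPolynomial (Fin 2) K))),
        ∀ y ∈ Submodule.span K ({1} ∪ (t : Set (MvPolynomial (Fin 2) K))), x * y ∈ W := by
      intro x hx
      induction hx using Submodule.span_induction with
      | mem p hp =>
        intro y hy
        induction hy using Submodule.span_induction with
        | mem q hq =>
          rcases hp with rfl | hp
          · rw [one_mul]
            exact hspan_le_W (Submodule.subset_span hq)
          · rcases hq with rfl | hq
            · rw [mul_one]
              exact hspan_le_W (Submodule.subset_span (Set.mem_union_right _ hp))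
            · exact hprod p hp q hq
        | zero => rw [mul_zero]; exact Submodule.zero_mem _
        | add a b ha hb iha ihb => rw [mul_add]; exact Submodule.add_mem _ iha ihb
        | smul c a ha iha => rw [mul_smul_comm]; exact Submodule.smul_mem _ _ iha
      | zero => intro y hy; rw [zero_mul]; exact Submodule.zero_mem _
      | add a b ha hb iha ihb =>
        intro y hy
        rw [add_mul]
        exact Submodule.add_mem _ (iha y hy) (ihb y hy)
      | smul c a ha iha =>
        intro y hy
        rw [smul_mul_assoc]
        exact Submodule.smul_mem _ _ (iha y hy)
    have hI : ∀ z w : MvPolynomial (Fin 2) K,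
        z ∈ (Ideal.span {(X 0 : MvPolynomial (Fin 2) K) ^ 2}).restrictScalars K →
        z * w ∈ W := by
      intro z w hz
      exact Submodule.mem_sup_right (Ideal.mul_mem_right w _ hz)
    have mulW : ∀ x ∈ W, ∀ y ∈ W, x * y ∈ W := by
      intro x hx y hy
      obtain ⟨x1, hx1, x2, hx2, rfl⟩ := Submodule.mem_sup.mp hx
      obtain ⟨y1, hy1, y2, hy2, rfl⟩ := Submodule.mem_sup.mp hy
      have e : (x1 + x2) * (y1 + y2) = x1 * y1 + (y2 * x1 + x2 * (y1 + y2)) := by ring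
      rw [e]
      refine Submodule.add_mem _ (hSS x1 hx1 y1 hy1) (Submodule.add_mem _ ?_ ?_)
      · exact hI y2 x1 hy2
      · exact hI x2 (y1 + y2) hx2
    have hadj : ∀ x ∈ Algebra.adjoin K (t : Set (MvPolynomial (Fin 2) K)), x ∈ W := by
      intro x hx
      induction hx using Algebra.adjoin_induction with
      | mem p hp =>
        exact hspan_le_W (Submodule.subset_span (Set.mem_union_right _ hp))
      | algebraMap r =>
        rw [Algebra.algebraMap_eq_smul_one]
        exact hspan_le_W (Submodule.smul_mem _ _
          (Submodule.subset_span (Set.mem_union_left _ rfl)))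
      | add a b ha hb iha ihb => exact Submodule.add_mem _ iha ihb
      | mul a b ha hb iha ihb => exact mulW a iha b ihb
    have hsum_dN : (∑ i ∈ dN.support, dN i) = 1 + N := by
      have hsub : (∑ i ∈ dN.support, dN i) = ∑ i : Fin 2, dN i :=
        Finset.sum_subset (Finset.subset_univ _)
          (fun i _ hi => Finsupp.notMem_support_iff.mp hi)
      rw [hsub, Fin.sum_univ_two, hdN]
      simp [Finsupp.single_apply]
    have hspan_coeff : ∀ y ∈ Submodule.span K
        ({1} ∪ (t : Set (MvPolynomial (Fin 2) K))), coeff dN y = 0 := by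
      intro y hy
      induction hy using Submodule.span_induction with
      | mem p hp =>
        rcases hp with rfl | hp
        · rw [show (1 : MvPolynomial (Fin 2) K) = C 1 from rfl, coeff_C, if_neg]
          intro h
          have h2 := congrArg (fun d : Fin 2 →₀ ℕ => d 0) h
          simp [hdN, Finsupp.single_apply] at h2
        · apply coeff_eq_zero_of_totalDegree_lt
          rw [hsum_dN]
          have h1 : totalDegree p ≤ t.sup totalDegree := Finset.le_sup hp
          omega
      | zero => exact coeff_zero _
      | add a b ha hb iha ihb => rw [coeff_add, iha, ihb, add_zero]
      | smul c a ha iha => rw [coeff_smul, iha, smul_zero]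
    have hWcoeff : ∀ x ∈ W, coeff dN x = 0 := by
      intro x hx
      obtain ⟨y, hy, z, hz, rfl⟩ := Submodule.mem_sup.mp hx
      have hy0 : coeff dN y = 0 := hspan_coeff y hy
      have hz0 : coeff dN z = 0 := by
        obtain ⟨a, ha⟩ := Ideal.mem_span_singleton'.mp hz
        rw [← ha, X_pow_eq_monomial, coeff_mul_monomial', if_neg]
        intro hle
        have := hle 0
        simp [hdN, Finsupp.single_apply] at this
      rw [coeff_add, hy0, hz0, add_zero]
    have hXN : (X 0 * X 1 ^ N : MvPolynomial (Fin 2) K) ∈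
        Algebra.adjoin K (t : Set (MvPolynomial (Fin 2) K)) := by
      rw [ht]
      exact Algebra.subset_adjoin ⟨N, rfl⟩
    have hfin := hWcoeff _ (hadj _ hXN)
    rw [X_mul_pow_eq, coeff_monomial, if_pos rfl] at hfin
    exact one_ne_zero hfin
end

section
/- Let a ∈ ℕ_+^n be a positive weight and V a K-subspace of R = K[X_1,...,X_n]. Then the quotient S/hom_a(V) is a free K[t]-module, where S = R[t] and hom_a(V) is the K[t]-submodule of S generated by the a-homogenizations hom_a(f), f ∈ V. In fact, the monomials of R not of the form in_{τa}(f) for nonzero f ∈ V (for any chosen monomial order τ) form a K[t]-basis of S/hom_a(V). -/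
open MvPolynomial


/-- The `a`-degree of a polynomial: the maximal `a`-weighted degree of a monomial of `f`. -/
def wdeg {K : Type*} [CommSemiring K] {n : ℕ} (a : Fin n → ℕ)
    (f : MvPolynomial (Fin n) K) : ℕ :=
  f.support.sup (fun e => ∑ i, a i * e i)

/-- The initial form `in_a(f)`: the sum of the terms of `f` of maximal `a`-degree. -/
noncomputable def iniForm {K : Type*} [CommSemiring K] {n : ℕ} (a : Fin n → ℕ)
    (f : MvPolynomial (Fin n) K) : MvPolynomial (Fin n) K :=
  ∑ e ∈ f.support.filter (fun e => (∑ i, a i * e i) = wdeg a f), monomial e (coeff e f)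

/-- The `a`-homogenization `hom_a(f)` of `f`, an element of `S = R[t]`. -/
noncomputable def homog {K : Type*} [CommSemiring K] {n : ℕ} (a : Fin n → ℕ)
    (f : MvPolynomial (Fin n) K) : Polynomial (MvPolynomial (Fin n) K) :=
  ∑ e ∈ f.support,
    Polynomial.C (monomial e (coeff e f)) * Polynomial.X ^ (wdeg a f - ∑ i, a i * e i)

/-- `m'` is the refinement `τa` of the weight `a` by the monomial order `m = τ`. -/
def IsRefinement {n : ℕ} (a : Fin n → ℕ) (m m' : MonomialOrder (Fin n)) : Prop :=
  ∀ d e : Fin n →₀ ℕ, (m'.toSyn d < m'.toSyn e ↔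
    ((∑ i, a i * d i) < ∑ i, a i * e i ∨
      ((∑ i, a i * d i) = (∑ i, a i * e i) ∧ m.toSyn d < m.toSyn e)))

/-- `S = R[t]` is an algebra (hence a module) over `K[t]`. -/
noncomputable instance polyAlgebra {K : Type*} [Field K] {n : ℕ} :
    Algebra (Polynomial K) (Polynomial (MvPolynomial (Fin n) K)) :=
  (Polynomial.mapRingHom (MvPolynomial.C : K →+* MvPolynomial (Fin n) K)).toAlgebra

/-- `hom_a(V)`: the `K[t]`-submodule of `S = R[t]` generated by the homogenizations
`hom_a(f)`, `f ∈ V`. -/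
noncomputable def homogSubmodule {K : Type*} [Field K] {n : ℕ} (a : Fin n → ℕ)
    (V : Submodule K (MvPolynomial (Fin n) K)) :
    Submodule (Polynomial K) (Polynomial (MvPolynomial (Fin n) K)) :=
  Submodule.span (Polynomial K) {p | ∃ f ∈ V, p = homog a f}

section Aux

variable {K : Type*} [Field K] {n : ℕ}

lemma smul_def' (p : Polynomial K) (g : Polynomial (MvPolynomial (Fin n) K)) :
    p • g = Polynomial.map MvPolynomial.C p * g := by
  rw [Algebra.smul_def, RingHom.algebraMap_toAlgebra, Polynomial.coe_mapRingHom]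

noncomputable def piD (a : Fin n → ℕ) (d : ℕ) :
    Polynomial (MvPolynomial (Fin n) K) →ₗ[K] MvPolynomial (Fin n) K :=
  ∑ j ∈ Finset.range (d + 1),
    ((weightedHomogeneousComponent a (d - j)).restrictScalars K).comp
      ((Polynomial.lcoeff (MvPolynomial (Fin n) K) j).restrictScalars K)

lemma piD_apply (a : Fin n → ℕ) (d : ℕ) (g : Polynomial (MvPolynomial (Fin n) K)) :
    piD a d g = ∑ j ∈ Finset.range (d + 1),
      weightedHomogeneousComponent a (d - j) (g.coeff j) := by
  simp [piD]

lemma weight_eq (a : Fin n → ℕ) (e : Fin n →₀ ℕ) :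
    (Finsupp.weight a) e = ∑ i, a i * e i := by
  rw [Finsupp.weight_apply, Finsupp.sum]
  rw [Finset.sum_subset (Finset.subset_univ _)]
  · exact Finset.sum_congr rfl fun i _ => by rw [smul_eq_mul, mul_comm]
  · intro i _ hi
    simp [Finsupp.notMem_support_iff.mp hi]

lemma wHC_monomial (a : Fin n → ℕ) (k : ℕ) (e : Fin n →₀ ℕ) (c : K) :
    weightedHomogeneousComponent a k (monomial e c) =
      if (∑ i, a i * e i) = k then monomial e c else 0 := by
  classical
  ext e'
  rw [coeff_weightedHomogeneousComponent, weight_eq]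
  by_cases he : e' = e
  · subst he
    simp [MvPolynomial.coeff_monomial]
    split_ifs <;> simp_all
  · simp [MvPolynomial.coeff_monomial, Ne.symm he]
    split_ifs <;> simp [MvPolynomial.coeff_monomial, Ne.symm he]

lemma piD_C_mul_X_pow (a : Fin n → ℕ) (d k : ℕ) (e : Fin n →₀ ℕ) (c : K) :
    piD a d (Polynomial.C (monomial e c) * Polynomial.X ^ k) =
      if (∑ i, a i * e i) + k = d then monomial e c else 0 := by
  classical
  rw [piD_apply]
  rw [Polynomial.C_mul_X_pow_eq_monomial]
  have : ∀ j, Polynomial.coeff (Polynomial.monomial k (monomial e c)) j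
      = if k = j then monomial e c else 0 := fun j => Polynomial.coeff_monomial
  simp_rw [this]
  by_cases hk : k ≤ d
  · rw [Finset.sum_eq_single k]
    · rw [if_pos rfl, wHC_monomial]
      congr 1
      · simp only [eq_iff_iff]; omega
    · intro j _ hj
      rw [if_neg (Ne.symm hj), map_zero]
    · intro h
      exact absurd (Finset.mem_range.mpr (by omega)) h
  · rw [if_neg (by omega)]
    apply Finset.sum_eq_zero
    intro j hj
    rw [if_neg (by simp at hj; omega), map_zero]

lemma piD_monomial_smul (a : Fin n → ℕ) (d k : ℕ) (c : K)
    (g : Polynomial (MvPolynomial (Fin n) K)) :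
    piD a d ((Polynomial.monomial k c : Polynomial K) • g) =
      if k ≤ d then c • piD a (d - k) g else 0 := by
  classical
  rw [piD_apply, smul_def', Polynomial.map_monomial]
  have hco : ∀ j, ((Polynomial.monomial k (MvPolynomial.C c :
      MvPolynomial (Fin n) K)) * g).coeff j =
      if k ≤ j then MvPolynomial.C c * g.coeff (j - k) else 0 := by
    intro j
    rw [← Polynomial.C_mul_X_pow_eq_monomial, mul_assoc, Polynomial.coeff_C_mul,
      mul_comm (Polynomial.X ^ k) g, Polynomial.coeff_mul_X_pow']
    split_ifs <;> simp
  simp_rw [hco]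
  have hterm : ∀ j, weightedHomogeneousComponent a (d - j)
      (if k ≤ j then MvPolynomial.C c * g.coeff (j - k) else 0) =
      if k ≤ j then c • weightedHomogeneousComponent a (d - j) (g.coeff (j - k)) else 0 := by
    intro j
    split_ifs with h
    · rw [← MvPolynomial.smul_eq_C_mul, map_smul]
    · rw [map_zero]
  simp_rw [hterm]
  rw [← Finset.sum_filter]
  have hfil : (Finset.range (d + 1)).filter (fun j => k ≤ j) = Finset.Ico k (d + 1) := by
    ext j; simp [Finset.mem_Ico]; omega
  rw [hfil, Finset.sum_Ico_eq_sum_range]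
  by_cases hk : k ≤ d
  · rw [if_pos hk, piD_apply, Finset.smul_sum]
    have : d + 1 - k = (d - k) + 1 := by omega
    rw [this]
    apply Finset.sum_congr rfl
    intro i hi
    have h1 : k + i - k = i := by omega
    have h2 : d - (k + i) = d - k - i := by omega
    rw [h1, h2]
  · rw [if_neg hk]
    have : d + 1 - k = 0 := by omega
    rw [this]
    simp

lemma piD_smul (a : Fin n → ℕ) (d : ℕ) (p : Polynomial K)
    (g : Polynomial (MvPolynomial (Fin n) K)) :
    piD a d (p • g) = ∑ k ∈ Finset.range (d + 1), p.coeff k • piD a (d - k) g := by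
  classical
  induction p using Polynomial.induction_on' with
  | add p q hp hq =>
    rw [add_smul, map_add, hp, hq, ← Finset.sum_add_distrib]
    exact Finset.sum_congr rfl fun k _ => by rw [Polynomial.coeff_add, add_smul]
  | monomial k c =>
    rw [piD_monomial_smul]
    by_cases hk : k ≤ d
    · rw [if_pos hk, Finset.sum_eq_single k]
      · rw [Polynomial.coeff_monomial, if_pos rfl]
      · intro j _ hj
        rw [Polynomial.coeff_monomial, if_neg (Ne.symm hj), zero_smul]
      · intro h; exact absurd (Finset.mem_range.mpr (by omega)) h
    · rw [if_neg hk]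
      symm
      apply Finset.sum_eq_zero
      intro j hj
      rw [Polynomial.coeff_monomial, if_neg (by simp at hj; omega), zero_smul]

lemma piD_homog (a : Fin n → ℕ) (d : ℕ) (f : MvPolynomial (Fin n) K) :
    piD a d (homog a f) = if d = wdeg a f then f else 0 := by
  classical
  rw [homog, map_sum]
  have hterm : ∀ e ∈ f.support,
      piD a d (Polynomial.C (monomial e (coeff e f)) *
        Polynomial.X ^ (wdeg a f - ∑ i, a i * e i)) =
      if d = wdeg a f then monomial e (coeff e f) else 0 := by
    intro e he
    rw [piD_C_mul_X_pow]
    have hle : (∑ i, a i * e i) ≤ wdeg a f := Finset.le_sup (f := fun e => ∑ i, a i * e i) he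
    congr 1
    simp only [eq_iff_iff]
    omega
  rw [Finset.sum_congr rfl hterm]
  split_ifs with h
  · exact f.support_sum_monomial_coeff
  · simp

lemma piD_mem (a : Fin n → ℕ) (V : Submodule K (MvPolynomial (Fin n) K))
    {g : Polynomial (MvPolynomial (Fin n) K)} (hg : g ∈ homogSubmodule a V) :
    ∀ d, piD a d g ∈ V := by
  induction hg using Submodule.span_induction with
  | mem x hx =>
    obtain ⟨f, hf, rfl⟩ := hx
    intro d
    rw [piD_homog]
    split_ifs
    · exact hf
    · exact V.zero_mem
  | zero => intro d; rw [map_zero]; exact V.zero_mem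
  | add x y hx hy ihx ihy => intro d; rw [map_add]; exact V.add_mem (ihx d) (ihy d)
  | smul p x hx ihx =>
    intro d
    rw [piD_smul]
    exact Submodule.sum_mem V fun k _ => V.smul_mem _ (ihx (d - k))

lemma piD_smul_single (a : Fin n → ℕ) (d : ℕ) (p : Polynomial K) (e : Fin n →₀ ℕ) :
    piD a d (p • Polynomial.C (monomial e (1 : K))) =
      if (∑ i, a i * e i) ≤ d then monomial e (p.coeff (d - ∑ i, a i * e i)) else 0 := by
  classical
  rw [piD_smul]
  have hbase : ∀ j, piD a j (Polynomial.C (monomial e (1 : K))) =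
      if (∑ i, a i * e i) = j then monomial e (1 : K) else 0 := by
    intro j
    have := piD_C_mul_X_pow (K := K) a j 0 e 1
    simpa using this
  simp_rw [hbase]
  by_cases hle : (∑ i, a i * e i) ≤ d
  · rw [if_pos hle, Finset.sum_eq_single (d - ∑ i, a i * e i)]
    · rw [if_pos (by omega), MvPolynomial.smul_monomial, smul_eq_mul, mul_one]
    · intro j hj hne
      simp only [Finset.mem_range] at hj
      rw [if_neg (by omega), smul_zero]
    · intro h
      exact absurd (Finset.mem_range.mpr (by omega)) h
  · rw [if_neg hle]
    apply Finset.sum_eq_zero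
    intro j hj
    simp only [Finset.mem_range] at hj
    rw [if_neg (by omega), smul_zero]

lemma inExp_mem_support {m' : MonomialOrder (Fin n)} {f : MvPolynomial (Fin n) K}
    (hf : f ≠ 0) : m'.inExp f ∈ f.support := by
  obtain ⟨e, he, hsup⟩ := Finset.exists_mem_eq_sup f.support
    (MvPolynomial.support_nonempty.mpr hf) m'.toSyn
  rw [MonomialOrder.inExp, hsup, AddEquiv.symm_apply_apply]
  exact he

lemma toSyn_le_inExp {m' : MonomialOrder (Fin n)} {f : MvPolynomial (Fin n) K}
    {e : Fin n →₀ ℕ} (he : e ∈ f.support) : m'.toSyn e ≤ m'.toSyn (m'.inExp f) := by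
  rw [MonomialOrder.inExp, AddEquiv.apply_symm_apply]
  exact Finset.le_sup he

lemma adeg_le_inExp {a : Fin n → ℕ} {m m' : MonomialOrder (Fin n)}
    (hm' : IsRefinement a m m') {f : MvPolynomial (Fin n) K}
    {e : Fin n →₀ ℕ} (he : e ∈ f.support) :
    (∑ i, a i * e i) ≤ ∑ i, a i * (m'.inExp f) i := by
  have h := toSyn_le_inExp (m' := m') he
  by_contra hlt
  push_neg at hlt
  have := (hm' (m'.inExp f) e).mpr (Or.inl hlt)
  exact absurd h (not_le.mpr this)

lemma adeg_inExp {a : Fin n → ℕ} {m m' : MonomialOrder (Fin n)}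
    (hm' : IsRefinement a m m') {f : MvPolynomial (Fin n) K} (hf : f ≠ 0) :
    (∑ i, a i * (m'.inExp f) i) = wdeg a f := by
  apply le_antisymm
  · exact Finset.le_sup (f := fun e => ∑ i, a i * e i) (inExp_mem_support hf)
  · exact Finset.sup_le fun e he => adeg_le_inExp hm' he

lemma monomial_smul_single (k : ℕ) (c : K) (e : Fin n →₀ ℕ) :
    (Polynomial.monomial k c : Polynomial K) • Polynomial.C (monomial e (1 : K)) =
      Polynomial.C (monomial e c) * Polynomial.X ^ k := by
  rw [smul_def', Polynomial.map_monomial, Polynomial.monomial_mul_C,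
    Polynomial.C_mul_X_pow_eq_monomial, MvPolynomial.C_mul_monomial, mul_one]

lemma span_aux (a : Fin n → ℕ) (m m' : MonomialOrder (Fin n)) (hm' : IsRefinement a m m')
    (V : Submodule K (MvPolynomial (Fin n) K)) (e : Fin n →₀ ℕ) :
    (Submodule.Quotient.mk (Polynomial.C (monomial e (1 : K))) :
        Polynomial (MvPolynomial (Fin n) K) ⧸ homogSubmodule a V) ∈
      Submodule.span (Polynomial K)
        (Set.range fun e' : {e : Fin n →₀ ℕ // ¬ ∃ f ∈ V, f ≠ 0 ∧ m'.inExp f = e} =>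
          (Submodule.Quotient.mk (Polynomial.C (monomial e'.1 (1 : K))) :
            Polynomial (MvPolynomial (Fin n) K) ⧸ homogSubmodule a V)) := by
  classical
  have hwf : WellFounded (fun e₁ e₂ : Fin n →₀ ℕ => m'.toSyn e₁ < m'.toSyn e₂) :=
    InvImage.wf _ wellFounded_lt
  refine hwf.induction (C := fun e =>
    (Submodule.Quotient.mk (Polynomial.C (monomial e (1 : K))) :
        Polynomial (MvPolynomial (Fin n) K) ⧸ homogSubmodule a V) ∈
      Submodule.span (Polynomial K)
        (Set.range fun e' : {e : Fin n →₀ ℕ // ¬ ∃ f ∈ V, f ≠ 0 ∧ m'.inExp f = e} =>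
          (Submodule.Quotient.mk (Polynomial.C (monomial e'.1 (1 : K))) :
            Polynomial (MvPolynomial (Fin n) K) ⧸ homogSubmodule a V))) e ?_
  intro e IH
  by_cases he : ∃ f ∈ V, f ≠ 0 ∧ m'.inExp f = e
  · obtain ⟨f, hfV, hf0, hfe⟩ := he
    have hes : e ∈ f.support := hfe ▸ inExp_mem_support hf0
    have hce : coeff e f ≠ 0 := MvPolynomial.mem_support_iff.mp hes
    set f' := (coeff e f)⁻¹ • f with hf'def
    have hf'V : f' ∈ V := V.smul_mem _ hfV
    have hsupp : f'.support = f.support := by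
      ext e'
      simp only [MvPolynomial.mem_support_iff, hf'def, MvPolynomial.coeff_smul,
        smul_eq_mul]
      constructor
      · intro h hc
        exact h (by rw [hc, mul_zero])
      · intro h hc
        exact h ((mul_eq_zero.mp hc).resolve_left (inv_ne_zero hce))
    have hcoeffe : coeff e f' = 1 := by
      rw [hf'def, MvPolynomial.coeff_smul, smul_eq_mul, inv_mul_cancel₀ hce]
    have he's : e ∈ f'.support := hsupp ▸ hes
    have hf'0 : f' ≠ 0 := fun h => by simp [h] at hcoeffe
    have hinExp : m'.inExp f' = e := by
      rw [MonomialOrder.inExp, hsupp, ← MonomialOrder.inExp, hfe]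
    have hadeg : (∑ i, a i * e i) = wdeg a f' := by
      rw [← hinExp]; exact adeg_inExp hm' hf'0
    have hsplit : homog a f' = Polynomial.C (monomial e (1 : K)) +
        ∑ e' ∈ f'.support.erase e,
          Polynomial.C (monomial e' (coeff e' f')) *
            Polynomial.X ^ (wdeg a f' - ∑ i, a i * e' i) := by
      rw [homog, ← Finset.add_sum_erase _ _ he's, hcoeffe]
      have h0 : wdeg a f' - (∑ i, a i * e i) = 0 := by omega
      rw [h0, pow_zero, mul_one]
    have hmk0 : (Submodule.Quotient.mk (homog a f') :
        Polynomial (MvPolynomial (Fin n) K) ⧸ homogSubmodule a V) = 0 :=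
      (Submodule.Quotient.mk_eq_zero _).mpr (Submodule.subset_span ⟨f', hf'V, rfl⟩)
    have hkey : (Submodule.Quotient.mk (Polynomial.C (monomial e (1 : K))) :
        Polynomial (MvPolynomial (Fin n) K) ⧸ homogSubmodule a V) =
        - ∑ e' ∈ f'.support.erase e,
          (Polynomial.monomial (wdeg a f' - ∑ i, a i * e' i) (coeff e' f') :
            Polynomial K) •
          (Submodule.Quotient.mk (Polynomial.C (monomial e' (1 : K))) :
            Polynomial (MvPolynomial (Fin n) K) ⧸ homogSubmodule a V) := by
      have := congrArg (Submodule.Quotient.mk (p := homogSubmodule a V)) hsplit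
      rw [hmk0, Submodule.Quotient.mk_add] at this
      have h2 : (Submodule.Quotient.mk (∑ e' ∈ f'.support.erase e,
          Polynomial.C (monomial e' (coeff e' f')) *
            Polynomial.X ^ (wdeg a f' - ∑ i, a i * e' i)) :
          Polynomial (MvPolynomial (Fin n) K) ⧸ homogSubmodule a V) =
          ∑ e' ∈ f'.support.erase e,
            (Polynomial.monomial (wdeg a f' - ∑ i, a i * e' i) (coeff e' f') :
              Polynomial K) •
            (Submodule.Quotient.mk (Polynomial.C (monomial e' (1 : K)))) := by
        rw [← (homogSubmodule a V).mkQ_apply, map_sum]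
        refine Finset.sum_congr rfl fun e' _ => ?_
        rw [← monomial_smul_single, map_smul, Submodule.mkQ_apply]
      rw [h2] at this
      exact eq_neg_of_add_eq_zero_left this.symm
    rw [hkey]
    refine Submodule.neg_mem _ (Submodule.sum_mem _ fun e' he' => ?_)
    refine Submodule.smul_mem _ _ ?_
    have he'1 : e' ∈ f'.support := Finset.mem_of_mem_erase he'
    have hne : e' ≠ e := Finset.ne_of_mem_erase he'
    have hlt : m'.toSyn e' < m'.toSyn e := by
      have hle : m'.toSyn e' ≤ m'.toSyn (m'.inExp f') := toSyn_le_inExp he'1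
      rw [hinExp] at hle
      exact lt_of_le_of_ne hle (fun h => hne (m'.toSyn.injective h))
    exact IH e' hlt
  · exact Submodule.subset_span ⟨⟨e, he⟩, rfl⟩

lemma span_top (a : Fin n → ℕ) (m m' : MonomialOrder (Fin n)) (hm' : IsRefinement a m m')
    (V : Submodule K (MvPolynomial (Fin n) K)) :
    Submodule.span (Polynomial K)
        (Set.range fun e' : {e : Fin n →₀ ℕ // ¬ ∃ f ∈ V, f ≠ 0 ∧ m'.inExp f = e} =>
          (Submodule.Quotient.mk (Polynomial.C (monomial e'.1 (1 : K))) :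
            Polynomial (MvPolynomial (Fin n) K) ⧸ homogSubmodule a V)) = ⊤ := by
  classical
  rw [Submodule.eq_top_iff']
  intro x
  obtain ⟨g, rfl⟩ := Submodule.Quotient.mk_surjective _ x
  induction g using Polynomial.induction_on' with
  | add p q hp hq =>
    rw [Submodule.Quotient.mk_add]
    exact Submodule.add_mem _ hp hq
  | monomial k r =>
    have hrep : (Polynomial.monomial k r : Polynomial (MvPolynomial (Fin n) K)) =
        ∑ e ∈ r.support, Polynomial.C (monomial e (coeff e r)) * Polynomial.X ^ k := by
      calc (Polynomial.monomial k r : Polynomial (MvPolynomial (Fin n) K))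
          = Polynomial.C r * Polynomial.X ^ k := (Polynomial.C_mul_X_pow_eq_monomial).symm
        _ = Polynomial.C (∑ e ∈ r.support, monomial e (coeff e r)) * Polynomial.X ^ k := by
            rw [r.support_sum_monomial_coeff]
        _ = (∑ e ∈ r.support, Polynomial.C (monomial e (coeff e r))) * Polynomial.X ^ k := by
            rw [map_sum]
        _ = _ := Finset.sum_mul _ _ _
    rw [hrep, ← Submodule.mkQ_apply, map_sum]
    refine Submodule.sum_mem _ fun e _ => ?_
    rw [← monomial_smul_single, map_smul]
    refine Submodule.smul_mem _ _ ?_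
    rw [Submodule.mkQ_apply]
    exact span_aux a m m' hm' V e

set_option maxHeartbeats 1000000 in
lemma indep (a : Fin n → ℕ) (m m' : MonomialOrder (Fin n)) (hm' : IsRefinement a m m')
    (V : Submodule K (MvPolynomial (Fin n) K)) :
    LinearIndependent (Polynomial K)
      (fun e' : {e : Fin n →₀ ℕ // ¬ ∃ f ∈ V, f ≠ 0 ∧ m'.inExp f = e} =>
        (Submodule.Quotient.mk (Polynomial.C (monomial e'.1 (1 : K))) :
          Polynomial (MvPolynomial (Fin n) K) ⧸ homogSubmodule a V)) := by
  classical
  rw [linearIndependent_iff]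
  intro l hl
  set g := l.sum (fun e p => p • Polynomial.C (monomial e.1 (1 : K))) with hg
  have hmk : (Submodule.Quotient.mk g :
      Polynomial (MvPolynomial (Fin n) K) ⧸ homogSubmodule a V) = 0 := by
    rw [← hl, Finsupp.linearCombination_apply, hg, ← Submodule.mkQ_apply,
      map_finsuppSum]
    refine (Finsupp.sum_congr fun e _ => ?_).symm
    rw [map_smul, Submodule.mkQ_apply]
  have hgmem : g ∈ homogSubmodule a V := (Submodule.Quotient.mk_eq_zero _).mp hmk
  have hVd : ∀ d, piD a d g ∈ V := piD_mem a V hgmem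
  have hpi : ∀ d, piD a d g = ∑ e ∈ l.support,
      (if (∑ i, a i * e.1 i) ≤ d then
        monomial e.1 ((l e).coeff (d - ∑ i, a i * e.1 i)) else 0) := by
    intro d
    rw [hg, Finsupp.sum, map_sum]
    exact Finset.sum_congr rfl fun e _ => piD_smul_single a d (l e) e.1
  have hzero : ∀ d, piD a d g = 0 := by
    intro d
    by_contra hne
    have hmem := inExp_mem_support (m' := m') hne
    have hcne : MvPolynomial.coeff (m'.inExp (piD a d g))
        (∑ e ∈ l.support, (if (∑ i, a i * e.1 i) ≤ d then
          monomial e.1 ((l e).coeff (d - ∑ i, a i * e.1 i)) else 0)) ≠ 0 := by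
      rw [← hpi d]
      exact MvPolynomial.mem_support_iff.mp hmem
    rw [MvPolynomial.coeff_sum] at hcne
    obtain ⟨e, he, hne2⟩ := Finset.exists_ne_zero_of_sum_ne_zero hcne
    have : m'.inExp (piD a d g) = e.1 := by
      by_contra hne3
      apply hne2
      split_ifs
      · rw [MvPolynomial.coeff_monomial, if_neg (fun h => hne3 h.symm)]
      · rw [MvPolynomial.coeff_zero]
    exact e.2 ⟨piD a d g, hVd d, hne, this ▸ rfl⟩
  refine Finsupp.ext fun e₀ => Polynomial.ext fun k => ?_
  rw [Finsupp.coe_zero, Pi.zero_apply, Polynomial.coeff_zero]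
  by_cases he₀ : e₀ ∈ l.support
  · set d := (∑ i, a i * e₀.1 i) + k with hd
    have hc : coeff e₀.1 (piD a d g) = (l e₀).coeff k := by
      rw [hpi d, MvPolynomial.coeff_sum, Finset.sum_eq_single_of_mem e₀ he₀]
      · rw [if_pos (by omega)]
        have : d - (∑ i, a i * e₀.1 i) = k := by omega
        rw [this, MvPolynomial.coeff_monomial, if_pos rfl]
      · intro b _ hbne
        have : b.1 ≠ e₀.1 := fun h => hbne (Subtype.ext h)
        split_ifs
        · rw [MvPolynomial.coeff_monomial, if_neg this]
        · rw [MvPolynomial.coeff_zero]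
    rw [hzero d, MvPolynomial.coeff_zero] at hc
    exact hc.symm
  · rw [Finsupp.notMem_support_iff.mp he₀, Polynomial.coeff_zero]

end Aux

/-- `S/hom_a(V)` is a free `K[t]`-module; in fact the monomials of `R` that are not initial
monomials (w.r.t. the order `τa` refining the weight `a` by `τ`) of nonzero elements of `V`
form a `K[t]`-basis of `S/hom_a(V)`. -/
theorem homog_quotient_free {K : Type*} [Field K] {n : ℕ} (a : Fin n → ℕ)
    (ha : ∀ i, 0 < a i) (m m' : MonomialOrder (Fin n)) (hm' : IsRefinement a m m')
    (V : Submodule K (MvPolynomial (Fin n) K)) :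
    Module.Free (Polynomial K)
      (Polynomial (MvPolynomial (Fin n) K) ⧸ homogSubmodule a V) ∧
    ∃ B : Module.Basis {e : Fin n →₀ ℕ // ¬ ∃ f ∈ V, f ≠ 0 ∧ m'.inExp f = e} (Polynomial K)
        (Polynomial (MvPolynomial (Fin n) K) ⧸ homogSubmodule a V),
      ∀ e, B e = Submodule.Quotient.mk (Polynomial.C (monomial e.1 (1 : K))) := by
  classical
  have hli := indep a m m' hm' V
  have hsp : ⊤ ≤ Submodule.span (Polynomial K)
      (Set.range fun e' : {e : Fin n →₀ ℕ // ¬ ∃ f ∈ V, f ≠ 0 ∧ m'.inExp f = e} =>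
        (Submodule.Quotient.mk (Polynomial.C (monomial e'.1 (1 : K))) :
          Polynomial (MvPolynomial (Fin n) K) ⧸ homogSubmodule a V)) :=
    (span_top a m m' hm' V).ge
  let B := Module.Basis.mk hli hsp
  exact ⟨Module.Free.of_basis B, B, fun e => Module.Basis.mk_apply hli hsp e⟩
end

section
/- Let I be an ideal of R = K[X_1,...,X_n] and a ∈ ℕ_+^n a positive weight. Set S = R[t] and let hom_a(I) be the ideal generated by the a-homogenizations of elements of I. Then S/(hom_a(I) + (t)) ≅ R/in_a(I), and for every nonzero α ∈ K, S/(hom_a(I) + (t-α)) ≅ R/I. Moreover t - α is a non-zerodivisor on S/hom_a(I) for every α ∈ K. -/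
open MvPolynomial

/-- The ideal `hom_a(I)` of `S = R[t]` generated by the homogenizations of elements of `I`. -/
noncomputable def homogIdeal {K : Type*} [Field K] {n : ℕ} (a : Fin n → ℕ)
    (I : Ideal (MvPolynomial (Fin n) K)) : Ideal (Polynomial (MvPolynomial (Fin n) K)) :=
  Ideal.span {p | ∃ f ∈ I, p = homog a f}

/-- The ideal `in_a(I)` of `R` generated by the initial forms of elements of `I`. -/
noncomputable def iniFormIdeal {K : Type*} [Field K] {n : ℕ} (a : Fin n → ℕ)
    (I : Ideal (MvPolynomial (Fin n) K)) : Ideal (MvPolynomial (Fin n) K) :=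
  Ideal.span {q | ∃ f ∈ I, q = iniForm a f}

namespace HomogAux

variable {K : Type*} [Field K] {n : ℕ}

/-- weight on `Option (Fin n)`: `none ↦ 1`, `some i ↦ a i`. -/
def wOpt (a : Fin n → ℕ) : Option (Fin n) → ℕ := fun o => o.elim 1 a

lemma le_wdeg {a : Fin n → ℕ} {f : MvPolynomial (Fin n) K} {e : Fin n →₀ ℕ}
    (he : e ∈ f.support) : (∑ i, a i * e i) ≤ wdeg a f :=
  Finset.le_sup (f := fun e => ∑ i, a i * e i) he

lemma weight_opt (a : Fin n → ℕ) (e' : Option (Fin n) →₀ ℕ) :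
    (Finsupp.weight (wOpt a)) e' = e' none + ∑ i, a i * e'.some i := by
  rw [Finsupp.weight_apply, Finsupp.sum_fintype _ _ (fun o => zero_smul ℕ (wOpt a o))]
  rw [Fintype.sum_option]
  simp only [smul_eq_mul, wOpt, Option.elim, mul_one, Finsupp.some_apply]
  congr 1
  exact Finset.sum_congr rfl fun i _ => mul_comm _ _

noncomputable def homogOpt (a : Fin n → ℕ) (f : MvPolynomial (Fin n) K) :
    MvPolynomial (Option (Fin n)) K :=
  ∑ e ∈ f.support,
    rename some (monomial e (coeff e f)) * (X none) ^ (wdeg a f - ∑ i, a i * e i)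

lemma optionEquivLeft_rename (q : MvPolynomial (Fin n) K) :
    optionEquivLeft K (Fin n) (rename some q) = Polynomial.C q := by
  have h : (optionEquivLeft K (Fin n)).toAlgHom.comp (rename some) =
      (Polynomial.CAlgHom : MvPolynomial (Fin n) K →ₐ[K] _) := by
    apply MvPolynomial.algHom_ext
    intro i
    simp [optionEquivLeft_X_some, Polynomial.CAlgHom]
  exact DFunLike.congr_fun h q

lemma equiv_homogOpt (a : Fin n → ℕ) (f : MvPolynomial (Fin n) K) :
    optionEquivLeft K (Fin n) (homogOpt a f) = homog a f := by
  rw [homogOpt, homog, map_sum]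
  refine Finset.sum_congr rfl fun e _ => ?_
  rw [map_mul, map_pow, optionEquivLeft_rename, optionEquivLeft_X_none]

lemma mapDomain_some_none (e : Fin n →₀ ℕ) : (Finsupp.mapDomain some e) none = 0 :=
  Finsupp.mapDomain_notin_range _ _ (by simp)

lemma some_mapDomain (e : Fin n →₀ ℕ) : (Finsupp.mapDomain some e).some = e := by
  ext i
  rw [Finsupp.some_apply, Finsupp.mapDomain_apply (Option.some_injective _)]

lemma homogOpt_isHomogeneous (a : Fin n → ℕ) (f : MvPolynomial (Fin n) K) :
    IsWeightedHomogeneous (wOpt a) (homogOpt a f) (wdeg a f) := by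
  rw [← mem_weightedHomogeneousSubmodule]
  refine Submodule.sum_mem _ fun e he => ?_
  rw [mem_weightedHomogeneousSubmodule]
  have h1 : IsWeightedHomogeneous (wOpt a) (rename some (monomial e (coeff e f)))
      (∑ i, a i * e i) := by
    rw [rename_monomial]
    apply isWeightedHomogeneous_monomial
    rw [weight_opt, mapDomain_some_none, some_mapDomain, zero_add]
  have h2 : IsWeightedHomogeneous (wOpt a)
      ((X none : MvPolynomial (Option (Fin n)) K) ^ (wdeg a f - ∑ i, a i * e i))
      (wdeg a f - ∑ i, a i * e i) := by
    rw [X_pow_eq_monomial]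
    apply isWeightedHomogeneous_monomial
    rw [weight_opt]
    simp [Finsupp.some_single_none]
  have := h1.mul h2
  rwa [Nat.add_sub_cancel' (le_wdeg he)] at this

/-- dehomogenization -/
noncomputable def deh : MvPolynomial (Option (Fin n)) K →ₐ[K] MvPolynomial (Fin n) K :=
  aeval (fun o => o.elim 1 X)

lemma deh_rename (q : MvPolynomial (Fin n) K) : deh (rename some q) = q := by
  have h : (deh : MvPolynomial (Option (Fin n)) K →ₐ[K] _).comp (rename some) =
      AlgHom.id K _ := by
    apply MvPolynomial.algHom_ext
    intro i
    simp [deh]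
  exact DFunLike.congr_fun h q

lemma deh_homogOpt (a : Fin n → ℕ) (f : MvPolynomial (Fin n) K) :
    deh (homogOpt a f) = f := by
  rw [homogOpt, map_sum]
  have : ∀ e ∈ f.support, deh (rename some (monomial e (coeff e f)) *
      (X none : MvPolynomial (Option (Fin n)) K) ^ (wdeg a f - ∑ i, a i * e i)) =
      monomial e (coeff e f) := by
    intro e _
    rw [map_mul, map_pow, deh_rename]
    have : deh (X none : MvPolynomial (Option (Fin n)) K) = 1 := by simp [deh]
    rw [this, one_pow, mul_one]
  rw [Finset.sum_congr rfl this, support_sum_monomial_coeff]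

lemma deh_monomial (e' : Option (Fin n) →₀ ℕ) (c : K) :
    deh (monomial e' c) = monomial e'.some c := by
  rw [deh, aeval_monomial,
    Finsupp.prod_option_index _ _ (fun o => pow_zero _) (fun o m₁ m₂ => pow_add _ _ _),
    monomial_eq]
  simp only [Option.elim, one_pow, one_mul, algebraMap_eq]


section Homogeneous

variable {a : Fin n → ℕ} {d : ℕ}

lemma weight_none (a : Fin n → ℕ) {e' : Option (Fin n) →₀ ℕ}
    (h : Finsupp.weight (wOpt a) e' = d) : e' none = d - ∑ i, a i * e'.some i := by
  rw [weight_opt] at h; omega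

lemma sum_some_le (a : Fin n → ℕ) {e' : Option (Fin n) →₀ ℕ}
    (h : Finsupp.weight (wOpt a) e' = d) : (∑ i, a i * e'.some i) ≤ d := by
  rw [weight_opt] at h; omega

lemma deh_support {p : MvPolynomial (Option (Fin n)) K} :
    deh p = ∑ e' ∈ p.support, monomial e'.some (coeff e' p) := by
  conv_lhs => rw [p.as_sum]
  rw [map_sum]
  exact Finset.sum_congr rfl fun e' _ => deh_monomial _ _

lemma wdeg_deh_le {p : MvPolynomial (Option (Fin n)) K}
    (hp : IsWeightedHomogeneous (wOpt a) p d) : wdeg a (deh p) ≤ d := by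
  rw [wdeg]
  apply Finset.sup_le
  intro e he
  rw [mem_support_iff] at he
  rw [deh_support, coeff_sum] at he
  obtain ⟨e', he', hne⟩ := Finset.exists_ne_zero_of_sum_ne_zero he
  rw [coeff_monomial] at hne
  by_cases h : e'.some = e
  · subst h
    exact (sum_some_le a (hp (mem_support_iff.mp he')))
  · simp [h] at hne

lemma homog_ext {p : MvPolynomial (Option (Fin n)) K}
    (hp : IsWeightedHomogeneous (wOpt a) p d) (hd : deh p = 0) : p = 0 := by
  by_contra hne
  obtain ⟨e₀, he₀⟩ := exists_coeff_ne_zero hne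
  have he₀s : e₀ ∈ p.support := mem_support_iff.mpr he₀
  have : coeff e₀.some (deh p) = coeff e₀ p := by
    rw [deh_support, coeff_sum]
    rw [Finset.sum_eq_single e₀]
    · rw [coeff_monomial, if_pos rfl]
    · intro e' he' hne'
      rw [coeff_monomial, if_neg]
      intro hs
      apply hne'
      ext o
      match o with
      | Option.some i => exact DFunLike.congr_fun hs i
      | none =>
        rw [weight_none a (hp (mem_support_iff.mp he')),
          weight_none a (hp he₀), hs]
    · intro h; exact absurd he₀s h
  rw [hd, coeff_zero] at this
  exact he₀ this.symm

lemma eq_homogOpt {p : MvPolynomial (Option (Fin n)) K}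
    (hp : IsWeightedHomogeneous (wOpt a) p d) :
    p = (X none) ^ (d - wdeg a (deh p)) * homogOpt a (deh p) := by
  have h1 : IsWeightedHomogeneous (wOpt a)
      ((X none : MvPolynomial (Option (Fin n)) K) ^ (d - wdeg a (deh p)) *
        homogOpt a (deh p)) d := by
    have hx : IsWeightedHomogeneous (wOpt a)
        ((X none : MvPolynomial (Option (Fin n)) K) ^ (d - wdeg a (deh p)))
        (d - wdeg a (deh p)) := by
      rw [X_pow_eq_monomial]
      apply isWeightedHomogeneous_monomial
      rw [weight_opt]
      simp [Finsupp.some_single_none]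
    have := hx.mul (homogOpt_isHomogeneous a (deh p))
    rwa [Nat.sub_add_cancel (wdeg_deh_le hp)] at this
  have h2 : deh ((X none : MvPolynomial (Option (Fin n)) K) ^ (d - wdeg a (deh p)) *
      homogOpt a (deh p)) = deh p := by
    rw [map_mul, map_pow]
    have : deh (X none : MvPolynomial (Option (Fin n)) K) = 1 := by simp [deh]
    rw [this, one_pow, one_mul, deh_homogOpt]
  have h3 : IsWeightedHomogeneous (wOpt a)
      (p - ((X none) ^ (d - wdeg a (deh p)) * homogOpt a (deh p))) d := by
    rw [← mem_weightedHomogeneousSubmodule] at hp h1 ⊢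
    exact Submodule.sub_mem _ hp h1
  have h4 : deh (p - ((X none) ^ (d - wdeg a (deh p)) * homogOpt a (deh p))) = 0 := by
    rw [map_sub, h2, sub_self]
  have := homog_ext h3 h4
  rwa [sub_eq_zero] at this

end Homogeneous

section IdealOpt

variable (a : Fin n → ℕ) (I : Ideal (MvPolynomial (Fin n) K))

noncomputable def gradedInst (a : Fin n → ℕ) :
    GradedAlgebra (weightedHomogeneousSubmodule K (wOpt (n := n) a)) :=
  weightedGradedAlgebra K (wOpt a)

attribute [local instance] gradedInst

/-- The homogenized ideal, living in `MvPolynomial (Option (Fin n)) K`. -/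
noncomputable def homogIdealOpt : Ideal (MvPolynomial (Option (Fin n)) K) :=
  Ideal.span {q | ∃ f ∈ I, q = homogOpt a f}

lemma homogIdealOpt_isHomogeneous :
    (homogIdealOpt a I).IsHomogeneous (weightedHomogeneousSubmodule K (wOpt a)) := by
  apply Ideal.homogeneous_span
  rintro x ⟨f, _, rfl⟩
  exact ⟨wdeg a f, homogOpt_isHomogeneous a f⟩

lemma deh_mem_of_mem {p : MvPolynomial (Option (Fin n)) K}
    (hp : p ∈ homogIdealOpt a I) : deh p ∈ I := by
  have hle : homogIdealOpt a I ≤ Ideal.comap (deh.toRingHom :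
      MvPolynomial (Option (Fin n)) K →+* MvPolynomial (Fin n) K) I := by
    rw [homogIdealOpt, Ideal.span_le]
    rintro x ⟨f, hf, rfl⟩
    show deh (homogOpt a f) ∈ I
    rwa [deh_homogOpt]
  exact hle hp

lemma mem_of_X_mul_mem {q : MvPolynomial (Option (Fin n)) K} {m : ℕ}
    (hq : IsWeightedHomogeneous (wOpt a) q m)
    (h : (X none : MvPolynomial (Option (Fin n)) K) * q ∈ homogIdealOpt a I) :
    q ∈ homogIdealOpt a I := by
  have hdeh : deh q ∈ I := by
    have := deh_mem_of_mem a I h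
    rwa [map_mul, (by simp [deh] : deh (X none : MvPolynomial (Option (Fin n)) K) = 1),
      one_mul] at this
  rw [eq_homogOpt hq]
  exact Ideal.mul_mem_left _ _ (Ideal.subset_span ⟨deh q, hdeh, rfl⟩)

lemma X_none_mem : (X none : MvPolynomial (Option (Fin n)) K) ∈
    weightedHomogeneousSubmodule K (wOpt a) 1 := by
  rw [mem_weightedHomogeneousSubmodule]
  exact isWeightedHomogeneous_X _ _ _

lemma nzd {α : K} {p : MvPolynomial (Option (Fin n)) K}
    (h : ((X none : MvPolynomial (Option (Fin n)) K) - C α) * p ∈ homogIdealOpt a I) :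
    p ∈ homogIdealOpt a I := by
  classical
  set 𝒜 := weightedHomogeneousSubmodule K (wOpt (n := n) a) with h𝒜
  have hJ := homogIdealOpt_isHomogeneous a I
  set J := homogIdealOpt a I with hJdef
  -- key: each homogeneous component of p lies in J
  rw [hJ.mem_iff]
  by_cases hα : α = 0
  · subst hα
    rw [C_0, sub_zero] at h
    intro m
    apply mem_of_X_mul_mem a I
      ((DirectSum.decompose 𝒜 p m).2 : IsWeightedHomogeneous (wOpt a) _ m)
    have hcomp := hJ (1 + m) h
    rwa [DirectSum.coe_decompose_mul_add_of_left_mem 𝒜 (X_none_mem a)] at hcomp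
  · intro m
    induction m using Nat.strong_induction_on with
    | _ m ih =>
      have hsub : ((X none : MvPolynomial (Option (Fin n)) K) - C α) * p =
          (X none : MvPolynomial (Option (Fin n)) K) * p - C α * p := by ring
      have hCmem : (C α : MvPolynomial (Option (Fin n)) K) ∈ 𝒜 0 :=
        isWeightedHomogeneous_C _ _
      have hCpm : ∀ k, (DirectSum.decompose 𝒜 ((C α : MvPolynomial (Option (Fin n)) K) * p) k
          : MvPolynomial (Option (Fin n)) K) =
          C α * (DirectSum.decompose 𝒜 p k : MvPolynomial (Option (Fin n)) K) := by
        intro k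
        have := DirectSum.coe_decompose_mul_add_of_left_mem 𝒜 (b := p) (j := k) hCmem
        rwa [zero_add] at this
      have hCmul : C α * (DirectSum.decompose 𝒜 p m : MvPolynomial (Option (Fin n)) K) ∈ J := by
        rcases m with _ | m
        · have hcomp := hJ 0 h
          rw [hsub, DirectSum.decompose_sub] at hcomp
          have hX0 : (DirectSum.decompose 𝒜
              ((X none : MvPolynomial (Option (Fin n)) K) * p) 0 :
              MvPolynomial (Option (Fin n)) K) = 0 :=
            DirectSum.coe_decompose_mul_of_left_mem_of_not_le 𝒜 (X_none_mem a) (by omega)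
          rw [DirectSum.sub_apply, AddSubgroupClass.coe_sub, hX0, hCpm 0, zero_sub] at hcomp
          rw [← neg_neg (C α * _)]
          exact J.neg_mem hcomp
        · have hcomp := hJ (m + 1) h
          rw [hsub, DirectSum.decompose_sub, DirectSum.sub_apply,
            AddSubgroupClass.coe_sub] at hcomp
          have hX : (DirectSum.decompose 𝒜
              ((X none : MvPolynomial (Option (Fin n)) K) * p) (m + 1) :
              MvPolynomial (Option (Fin n)) K) =
              (X none : MvPolynomial (Option (Fin n)) K) * DirectSum.decompose 𝒜 p m := by
            have := DirectSum.coe_decompose_mul_add_of_left_mem 𝒜 (b := p) (j := m)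
              (X_none_mem a)
            rwa [add_comm 1 m] at this
          rw [hX, hCpm (m + 1)] at hcomp
          have hXp : (X none : MvPolynomial (Option (Fin n)) K) *
              DirectSum.decompose 𝒜 p m ∈ J :=
            Ideal.mul_mem_left _ _ (ih m (by omega))
          have := J.sub_mem hXp hcomp
          simpa using this
      have : (DirectSum.decompose 𝒜 p m : MvPolynomial (Option (Fin n)) K) =
          C α⁻¹ * (C α * (DirectSum.decompose 𝒜 p m : MvPolynomial (Option (Fin n)) K)) := by
        rw [← mul_assoc, ← C_mul, inv_mul_cancel₀ hα, C_1, one_mul]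
      rw [this]
      exact Ideal.mul_mem_left _ _ hCmul

end IdealOpt

section Bridge

variable (a : Fin n → ℕ) (I : Ideal (MvPolynomial (Fin n) K))

lemma mem_homogIdeal_iff (g : Polynomial (MvPolynomial (Fin n) K)) :
    g ∈ homogIdeal a I ↔ (optionEquivLeft K (Fin n)).symm g ∈ homogIdealOpt a I := by
  constructor
  · intro hg
    have hle : homogIdeal a I ≤ Ideal.comap
        ((optionEquivLeft K (Fin n)).symm.toAlgHom.toRingHom) (homogIdealOpt a I) := by
      rw [homogIdeal, Ideal.span_le]
      rintro x ⟨f, hf, rfl⟩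
      show (optionEquivLeft K (Fin n)).symm (homog a f) ∈ homogIdealOpt a I
      rw [(optionEquivLeft K (Fin n)).symm_apply_eq.mpr (equiv_homogOpt a f).symm]
      exact Ideal.subset_span ⟨f, hf, rfl⟩
    exact hle hg
  · intro hg
    have hle : homogIdealOpt a I ≤ Ideal.comap
        ((optionEquivLeft K (Fin n)).toAlgHom.toRingHom) (homogIdeal a I) := by
      rw [homogIdealOpt, Ideal.span_le]
      rintro x ⟨f, hf, rfl⟩
      show (optionEquivLeft K (Fin n)) (homogOpt a f) ∈ homogIdeal a I
      rw [equiv_homogOpt a f]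
      exact Ideal.subset_span ⟨f, hf, rfl⟩
    have := hle hg
    rw [Ideal.mem_comap] at this
    have h2 : (optionEquivLeft K (Fin n)) ((optionEquivLeft K (Fin n)).symm g) ∈
        homogIdeal a I := this
    rwa [AlgEquiv.apply_symm_apply] at h2
  
lemma nzdS (α : K) (g : Polynomial (MvPolynomial (Fin n) K))
    (h : (Polynomial.X - Polynomial.C (C α)) * g ∈ homogIdeal a I) :
    g ∈ homogIdeal a I := by
  rw [mem_homogIdeal_iff] at h ⊢
  rw [map_mul, map_sub] at h
  have h1 : (optionEquivLeft K (Fin n)).symm (Polynomial.X) =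
      (X none : MvPolynomial (Option (Fin n)) K) :=
    (optionEquivLeft K (Fin n)).symm_apply_eq.mpr (optionEquivLeft_X_none _ _).symm
  have h2 : (optionEquivLeft K (Fin n)).symm (Polynomial.C (C α)) =
      (C α : MvPolynomial (Option (Fin n)) K) :=
    (optionEquivLeft K (Fin n)).symm_apply_eq.mpr (optionEquivLeft_C _ _ _).symm
  rw [h1, h2] at h
  exact nzd a I h

end Bridge

section Part2

variable (a : Fin n → ℕ) (I : Ideal (MvPolynomial (Fin n) K))

lemma eval_zero_homog (f : MvPolynomial (Fin n) K) :
    Polynomial.eval (0 : MvPolynomial (Fin n) K) (homog a f) = iniForm a f := by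
  rw [homog, iniForm]
  rw [Polynomial.eval_finset_sum]
  rw [Finset.sum_filter]
  refine Finset.sum_congr rfl fun e he => ?_
  rw [Polynomial.eval_mul, Polynomial.eval_pow, Polynomial.eval_C, Polynomial.eval_X]
  by_cases h : (∑ i, a i * e i) = wdeg a f
  · rw [if_pos h, h, Nat.sub_self, pow_zero, mul_one]
  · rw [if_neg h]
    have hlt : 0 < wdeg a f - ∑ i, a i * e i := by
      have := le_wdeg (K := K) (a := a) he
      omega
    rw [zero_pow (by omega), mul_zero]

noncomputable def part2Hom : Polynomial (MvPolynomial (Fin n) K) →+*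
    MvPolynomial (Fin n) K ⧸ iniFormIdeal a I :=
  (Ideal.Quotient.mk (iniFormIdeal a I)).comp
    (Polynomial.evalRingHom (0 : MvPolynomial (Fin n) K))

lemma part2Hom_surjective : Function.Surjective (part2Hom a I) := by
  intro y
  obtain ⟨r, rfl⟩ := Ideal.Quotient.mk_surjective y
  exact ⟨Polynomial.C r, by simp [part2Hom]⟩

lemma part2_ker : homogIdeal a I ⊔ Ideal.span
    {(Polynomial.X : Polynomial (MvPolynomial (Fin n) K))} = RingHom.ker (part2Hom a I) := by
  apply le_antisymm
  · apply sup_le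
    · rw [homogIdeal, Ideal.span_le]
      rintro x ⟨f, hf, rfl⟩
      rw [SetLike.mem_coe, RingHom.mem_ker, part2Hom, RingHom.comp_apply]
      rw [Polynomial.coe_evalRingHom, eval_zero_homog]
      rw [Ideal.Quotient.eq_zero_iff_mem]
      exact Ideal.subset_span ⟨f, hf, rfl⟩
    · rw [Ideal.span_le]
      rintro x hx
      rw [Set.mem_singleton_iff] at hx
      subst hx
      rw [SetLike.mem_coe, RingHom.mem_ker]
      simp [part2Hom]
  · intro g hg
    rw [RingHom.mem_ker, part2Hom, RingHom.comp_apply, Polynomial.coe_evalRingHom,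
      Ideal.Quotient.eq_zero_iff_mem] at hg
    have hsplit : g = (g - Polynomial.C (Polynomial.eval 0 g)) +
        Polynomial.C (Polynomial.eval 0 g) := by ring
    rw [hsplit]
    apply Ideal.add_mem
    · apply Ideal.mem_sup_right
      rw [Ideal.mem_span_singleton]
      rw [← Polynomial.coeff_zero_eq_eval_zero]
      rw [Polynomial.X_dvd_iff]
      simp
    · -- C of elements of iniFormIdeal lie in the sup
      have hle : iniFormIdeal a I ≤ Ideal.comap
          (Polynomial.C : MvPolynomial (Fin n) K →+* Polynomial (MvPolynomial (Fin n) K))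
          (homogIdeal a I ⊔ Ideal.span {(Polynomial.X :
            Polynomial (MvPolynomial (Fin n) K))}) := by
        rw [iniFormIdeal, Ideal.span_le]
        rintro x ⟨f, hf, rfl⟩
        rw [SetLike.mem_coe, Ideal.mem_comap]
        have hXdvd : (Polynomial.X : Polynomial (MvPolynomial (Fin n) K)) ∣
            homog a f - Polynomial.C (iniForm a f) := by
          rw [Polynomial.X_dvd_iff, Polynomial.coeff_sub,
            Polynomial.coeff_zero_eq_eval_zero, eval_zero_homog, Polynomial.coeff_C]
          simp
        have : (Polynomial.C (iniForm a f) : Polynomial (MvPolynomial (Fin n) K)) =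
            homog a f - (homog a f - Polynomial.C (iniForm a f)) := by ring
        rw [this]
        apply Ideal.sub_mem
        · exact Ideal.mem_sup_left (Ideal.subset_span ⟨f, hf, rfl⟩)
        · exact Ideal.mem_sup_right (Ideal.mem_span_singleton.mpr hXdvd)
      exact hle hg

noncomputable def part2Equiv : (Polynomial (MvPolynomial (Fin n) K) ⧸
    (homogIdeal a I ⊔ Ideal.span {(Polynomial.X : Polynomial (MvPolynomial (Fin n) K))}))
    ≃+* MvPolynomial (Fin n) K ⧸ iniFormIdeal a I :=
  (Ideal.quotEquivOfEq (part2_ker a I)).trans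
    (RingHom.quotientKerEquivOfSurjective (part2Hom_surjective a I))

end Part2

section Part3

variable (a : Fin n → ℕ) (I : Ideal (MvPolynomial (Fin n) K))

/-- Scaling substitution `X i ↦ β^(a i) • X i`. -/
noncomputable def tw (β : K) : MvPolynomial (Fin n) K →ₐ[K] MvPolynomial (Fin n) K :=
  aeval (fun i => C (β ^ a i) * X i)

lemma tw_C (β : K) (c : K) : tw a β (C c) = C c := by
  rw [tw, aeval_C, algebraMap_eq]

lemma tw_monomial (β : K) (e : Fin n →₀ ℕ) (c : K) :
    tw a β (monomial e c) = C (β ^ (∑ i, a i * e i)) * monomial e c := by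
  rw [tw, aeval_monomial]
  rw [Finsupp.prod_fintype _ _ (fun i => pow_zero _)]
  have heach : ∀ i : Fin n, (C (β ^ a i) * X i : MvPolynomial (Fin n) K) ^ e i =
      C (β ^ (a i * e i)) * X i ^ e i := by
    intro i
    rw [mul_pow, ← C_pow, ← pow_mul]
  rw [Finset.prod_congr rfl fun i _ => heach i, Finset.prod_mul_distrib, ← map_prod]
  rw [Finset.prod_pow_eq_pow_sum]
  rw [monomial_eq, Finsupp.prod_fintype _ _ (fun i => pow_zero _), algebraMap_eq]
  ring

lemma tw_tw {β γ : K} (h : β * γ = 1) (r : MvPolynomial (Fin n) K) :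
    tw a β (tw a γ r) = r := by
  have hcomp : (tw a β).comp (tw a γ) = AlgHom.id K (MvPolynomial (Fin n) K) := by
    apply MvPolynomial.algHom_ext
    intro i
    rw [AlgHom.comp_apply, AlgHom.id_apply]
    rw [tw, tw, aeval_X, map_mul, aeval_C, aeval_X, algebraMap_eq, ← mul_assoc, ← C_mul]
    rw [← mul_pow, mul_comm γ β, h, one_pow, C_1, one_mul]
  exact DFunLike.congr_fun hcomp r

lemma eval_C_homog {α : K} (hα : α ≠ 0) (f : MvPolynomial (Fin n) K) :
    Polynomial.eval (C α : MvPolynomial (Fin n) K) (homog a f) =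
      C (α ^ wdeg a f) * tw a α⁻¹ f := by
  have htw : tw a α⁻¹ f =
      ∑ e ∈ f.support, C ((α⁻¹) ^ (∑ i, a i * e i)) * monomial e (coeff e f) := by
    conv_lhs => rw [f.as_sum]
    rw [map_sum]
    exact Finset.sum_congr rfl fun e _ => tw_monomial a _ _ _
  rw [htw, Finset.mul_sum, homog, Polynomial.eval_finset_sum]
  refine Finset.sum_congr rfl fun e he => ?_
  rw [Polynomial.eval_mul, Polynomial.eval_pow, Polynomial.eval_C, Polynomial.eval_X]
  rw [mul_comm, ← C_pow, ← mul_assoc, ← C_mul]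
  congr 2
  rw [pow_sub₀ α hα (le_wdeg (K := K) (a := a) he), inv_pow]

noncomputable def part3Hom (α : K) : Polynomial (MvPolynomial (Fin n) K) →+*
    MvPolynomial (Fin n) K ⧸ I :=
  (Ideal.Quotient.mk I).comp
    ((tw a α).toRingHom.comp (Polynomial.evalRingHom (C α : MvPolynomial (Fin n) K)))

lemma part3Hom_apply (α : K) (g : Polynomial (MvPolynomial (Fin n) K)) :
    part3Hom a I α g = Ideal.Quotient.mk I (tw a α (Polynomial.eval (C α) g)) := rfl

lemma part3Hom_surjective {α : K} (hα : α ≠ 0) :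
    Function.Surjective (part3Hom a I α) := by
  intro y
  obtain ⟨r, rfl⟩ := Ideal.Quotient.mk_surjective y
  refine ⟨Polynomial.C (tw a α⁻¹ r), ?_⟩
  rw [part3Hom_apply, Polynomial.eval_C, tw_tw a (mul_inv_cancel₀ hα)]

lemma part3_ker {α : K} (hα : α ≠ 0) : homogIdeal a I ⊔ Ideal.span
    {Polynomial.X - Polynomial.C (C α : MvPolynomial (Fin n) K)} =
    RingHom.ker (part3Hom a I α) := by
  apply le_antisymm
  · apply sup_le
    · rw [homogIdeal, Ideal.span_le]
      rintro x ⟨f, hf, rfl⟩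
      rw [SetLike.mem_coe, RingHom.mem_ker, part3Hom_apply]
      rw [eval_C_homog a hα, map_mul, tw_C, tw_tw a (mul_inv_cancel₀ hα)]
      rw [Ideal.Quotient.eq_zero_iff_mem]
      exact Ideal.mul_mem_left _ _ hf
    · rw [Ideal.span_le]
      rintro x hx
      rw [Set.mem_singleton_iff] at hx
      subst hx
      rw [SetLike.mem_coe, RingHom.mem_ker, part3Hom_apply]
      rw [Polynomial.eval_sub, Polynomial.eval_X, Polynomial.eval_C, sub_self, map_zero,
        map_zero]
  · intro g hg
    rw [RingHom.mem_ker, part3Hom_apply, Ideal.Quotient.eq_zero_iff_mem] at hg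
    have hsplit : g = (g - Polynomial.C (Polynomial.eval (C α) g)) +
        Polynomial.C (Polynomial.eval (C α) g) := by ring
    rw [hsplit]
    apply Ideal.add_mem
    · exact Ideal.mem_sup_right (Ideal.mem_span_singleton.mpr
        Polynomial.X_sub_C_dvd_sub_C_eval)
    · have heval : Polynomial.eval (C α : MvPolynomial (Fin n) K) g =
          tw a α⁻¹ (tw a α (Polynomial.eval (C α) g)) :=
        (tw_tw a (inv_mul_cancel₀ hα) _).symm
      rw [heval]
      set f := tw a α (Polynomial.eval (C α) g) with hf
      -- show C (tw a α⁻¹ f) ∈ sup, for f ∈ I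
      clear_value f
      have h1 : tw a α⁻¹ f = C ((α⁻¹) ^ wdeg a f) *
          Polynomial.eval (C α : MvPolynomial (Fin n) K) (homog a f) := by
        rw [eval_C_homog a hα, ← mul_assoc, ← C_mul, ← mul_pow, inv_mul_cancel₀ hα,
          one_pow, C_1, one_mul]
      have h2 : (Polynomial.C (Polynomial.eval (C α : MvPolynomial (Fin n) K) (homog a f)) :
          Polynomial (MvPolynomial (Fin n) K)) ∈ homogIdeal a I ⊔ Ideal.span
          {Polynomial.X - Polynomial.C (C α : MvPolynomial (Fin n) K)} := by
        have : (Polynomial.C (Polynomial.eval (C α : MvPolynomial (Fin n) K) (homog a f)) :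
            Polynomial (MvPolynomial (Fin n) K)) =
            homog a f - (homog a f - Polynomial.C (Polynomial.eval (C α) (homog a f))) := by
          ring
        rw [this]
        apply Ideal.sub_mem
        · exact Ideal.mem_sup_left (Ideal.subset_span ⟨f, hg, rfl⟩)
        · exact Ideal.mem_sup_right (Ideal.mem_span_singleton.mpr
            Polynomial.X_sub_C_dvd_sub_C_eval)
      rw [h1, map_mul]
      exact Ideal.mul_mem_left _ _ h2

noncomputable def part3Equiv {α : K} (hα : α ≠ 0) : (Polynomial (MvPolynomial (Fin n) K) ⧸
    (homogIdeal a I ⊔ Ideal.span {Polynomial.X - Polynomial.C (C α : MvPolynomial (Fin n) K)}))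
    ≃+* MvPolynomial (Fin n) K ⧸ I :=
  (Ideal.quotEquivOfEq (part3_ker a I hα)).trans
    (RingHom.quotientKerEquivOfSurjective (part3Hom_surjective a I hα))

end Part3

end HomogAux

/-- For an ideal `I ⊆ R` and a positive weight `a`: `t - α` is a non-zerodivisor on
`S/hom_a(I)` for all `α ∈ K`, `S/(hom_a(I)+(t)) ≅ R/in_a(I)`, and
`S/(hom_a(I)+(t-α)) ≅ R/I` for all `α ≠ 0`. -/
theorem homog_deformation {K : Type*} [Field K] {n : ℕ} (a : Fin n → ℕ)
    (ha : ∀ i, 0 < a i) (I : Ideal (MvPolynomial (Fin n) K)) :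
    (∀ α : K, ∀ x : Polynomial (MvPolynomial (Fin n) K) ⧸ homogIdeal a I,
      Ideal.Quotient.mk (homogIdeal a I)
          (Polynomial.X - Polynomial.C (MvPolynomial.C α)) * x = 0 → x = 0) ∧
    Nonempty ((Polynomial (MvPolynomial (Fin n) K) ⧸
        (homogIdeal a I ⊔ Ideal.span {(Polynomial.X : Polynomial (MvPolynomial (Fin n) K))}))
      ≃+* MvPolynomial (Fin n) K ⧸ iniFormIdeal a I) ∧
    ∀ α : K, α ≠ 0 →
      Nonempty ((Polynomial (MvPolynomial (Fin n) K) ⧸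
          (homogIdeal a I ⊔
            Ideal.span {Polynomial.X - Polynomial.C (MvPolynomial.C α)}))
        ≃+* MvPolynomial (Fin n) K ⧸ I) := by
  classical
  refine ⟨?_, ⟨HomogAux.part2Equiv a I⟩, fun α hα => ⟨HomogAux.part3Equiv a I hα⟩⟩
  intro α x hx
  obtain ⟨g, rfl⟩ := Ideal.Quotient.mk_surjective x
  rw [← map_mul, Ideal.Quotient.eq_zero_iff_mem] at hx
  exact Ideal.Quotient.eq_zero_iff_mem.mpr (HomogAux.nzdS a I α g hx)
end

section
/- Let I be an ideal of R = K[X_1,...,X_n] and a ∈ ℕ_+^n a positive weight. If R/in_a(I) is reduced, then R/I is reduced; if R/in_a(I) is an integral domain, then R/I is an integral domain. -/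
set_option synthInstance.maxHeartbeats 1000000
set_option maxHeartbeats 1000000

open MvPolynomial

namespace IniProofAux

variable {K : Type*} [Field K] {n : ℕ} (a : Fin n → ℕ)

lemma weight_eq (e : Fin n →₀ ℕ) : (Finsupp.weight a) e = ∑ i, a i * e i := by
  rw [Finsupp.weight_apply, Finsupp.sum_fintype]
  · exact Finset.sum_congr rfl fun i _ => mul_comm _ _
  · intro i; simp

lemma wdeg_sup (f : MvPolynomial (Fin n) K) :
    wdeg a f = f.support.sup (fun e => (Finsupp.weight a) e) := by
  unfold wdeg
  exact Finset.sup_congr rfl fun e _ => (weight_eq a e).symm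

lemma iniForm_eq (f : MvPolynomial (Fin n) K) :
    iniForm a f = weightedHomogeneousComponent a (wdeg a f) f := by
  classical
  rw [iniForm, weightedHomogeneousComponent_apply]
  apply Finset.sum_congr _ (fun e _ => rfl)
  apply Finset.filter_congr
  intro e _
  rw [weight_eq]

lemma coeff_iniForm (f : MvPolynomial (Fin n) K) (e : Fin n →₀ ℕ) :
    coeff e (iniForm a f) = if (Finsupp.weight a) e = wdeg a f then coeff e f else 0 := by
  classical
  rw [iniForm_eq, coeff_weightedHomogeneousComponent]

lemma iniForm_isWH (f : MvPolynomial (Fin n) K) :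
    IsWeightedHomogeneous a (iniForm a f) (wdeg a f) := by
  rw [iniForm_eq]; exact weightedHomogeneousComponent_isWeightedHomogeneous _ _

lemma weight_le_wdeg {f : MvPolynomial (Fin n) K} {e : Fin n →₀ ℕ}
    (he : e ∈ f.support) : (Finsupp.weight a) e ≤ wdeg a f := by
  rw [wdeg_sup]; exact Finset.le_sup he

lemma iniForm_ne_zero {f : MvPolynomial (Fin n) K} (hf : f ≠ 0) : iniForm a f ≠ 0 := by
  obtain ⟨e, he, hsup⟩ := Finset.exists_mem_eq_sup f.support
    (support_nonempty.mpr hf) (fun e => (Finsupp.weight a) e)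
  have : coeff e (iniForm a f) ≠ 0 := by
    rw [coeff_iniForm, if_pos (by rw [wdeg_sup, hsup])]
    exact mem_support_iff.mp he
  exact fun h0 => this (by rw [h0, coeff_zero])

/-- workhorse: if `p` is nonzero homogeneous of degree `D` and every monomial of `q` has
weight `< D`, then `wdeg (p+q) = D` and `iniForm (p+q) = p`. -/
lemma top_component {p q : MvPolynomial (Fin n) K} {D : ℕ}
    (hp : IsWeightedHomogeneous a p D) (hp0 : p ≠ 0)
    (hq : ∀ e ∈ q.support, (Finsupp.weight a) e < D) :
    wdeg a (p + q) = D ∧ iniForm a (p + q) = p := by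
  have hcoeff : ∀ e : Fin n →₀ ℕ, (Finsupp.weight a) e = D → coeff e (p + q) = coeff e p := by
    intro e he
    have : coeff e q = 0 := by
      by_contra hc
      exact absurd (hq e (mem_support_iff.mpr hc)) (by rw [he]; exact lt_irrefl D)
    rw [coeff_add, this, add_zero]
  have hle : ∀ e ∈ (p + q).support, (Finsupp.weight a) e ≤ D := by
    intro e he
    rw [mem_support_iff, coeff_add] at he
    by_contra hlt
    push_neg at hlt
    have h1 : coeff e p = 0 := by
      by_contra hc; exact absurd (hp hc) (by omega)
    have h2 : coeff e q = 0 := by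
      by_contra hc; exact absurd (hq e (mem_support_iff.mpr hc)) (by omega)
    rw [h1, h2, add_zero] at he; exact he rfl
  obtain ⟨e0, he0⟩ := ne_zero_iff.mp hp0
  have he0w : (Finsupp.weight a) e0 = D := hp he0
  have he0mem : e0 ∈ (p + q).support := by
    rw [mem_support_iff, hcoeff e0 he0w]; exact he0
  have hwdeg : wdeg a (p + q) = D := by
    rw [wdeg_sup]
    apply le_antisymm (Finset.sup_le hle)
    calc D = (Finsupp.weight a) e0 := he0w.symm
    _ ≤ _ := Finset.le_sup he0mem
  refine ⟨hwdeg, ?_⟩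
  ext e
  rw [coeff_iniForm, hwdeg]
  split_ifs with h
  · exact hcoeff e h
  · by_contra hc
    exact h (hp fun h0 => hc h0.symm)

/-- tail lemma -/
lemma tail_lt {f : MvPolynomial (Fin n) K} {e : Fin n →₀ ℕ}
    (he : e ∈ (f - iniForm a f).support) : (Finsupp.weight a) e < wdeg a f := by
  rw [mem_support_iff, coeff_sub, coeff_iniForm] at he
  split_ifs at he with h
  · simp at he
  · refine lt_of_le_of_ne ?_ h
    rw [sub_zero] at he
    exact weight_le_wdeg a (mem_support_iff.mpr he)

lemma iniForm_mul (f g : MvPolynomial (Fin n) K) (hf : f ≠ 0) (hg : g ≠ 0) :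
    wdeg a (f * g) = wdeg a f + wdeg a g ∧
      iniForm a (f * g) = iniForm a f * iniForm a g := by
  set F := iniForm a f with hF
  set G := iniForm a g with hG
  set D := wdeg a f + wdeg a g with hD
  have hFG : IsWeightedHomogeneous a (F * G) D :=
    (iniForm_isWH a f).mul (iniForm_isWH a g)
  have hFG0 : F * G ≠ 0 := mul_ne_zero (iniForm_ne_zero a hf) (iniForm_ne_zero a hg)
  set q := F * (g - G) + (f - F) * G + (f - F) * (g - G) with hq
  have hfg : f * g = F * G + q := by rw [hq]; ring
  have hqlt : ∀ e ∈ q.support, (Finsupp.weight a) e < D := by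
    intro e he
    have hsub : q.support ⊆ (F * (g - G)).support ∪ ((f - F) * G).support ∪
        ((f - F) * (g - G)).support := by
      refine (Finset.Subset.trans (support_add) ?_)
      exact Finset.union_subset_union (support_add) (Finset.Subset.refl _)
    have key : ∀ (u v : MvPolynomial (Fin n) K) (du dv : ℕ),
        (∀ x ∈ u.support, (Finsupp.weight a) x ≤ du) →
        (∀ x ∈ v.support, (Finsupp.weight a) x ≤ dv) →
        e ∈ (u * v).support → (Finsupp.weight a) e ≤ du + dv := by
      intro u v du dv hu hv hmem
      have := support_mul u v hmem
      rw [Finset.mem_add] at this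
      obtain ⟨x, hx, y, hy, rfl⟩ := this
      rw [map_add]
      exact add_le_add (hu x hx) (hv y hy)
    have hFsup : ∀ x ∈ F.support, (Finsupp.weight a) x ≤ wdeg a f :=
      fun x hx => le_of_eq (iniForm_isWH a f (mem_support_iff.mp hx))
    have hGsup : ∀ x ∈ G.support, (Finsupp.weight a) x ≤ wdeg a g :=
      fun x hx => le_of_eq (iniForm_isWH a g (mem_support_iff.mp hx))
    have hftail : ∀ x ∈ (f - F).support, (Finsupp.weight a) x + 1 ≤ wdeg a f :=
      fun x hx => tail_lt a hx
    have hgtail : ∀ x ∈ (g - G).support, (Finsupp.weight a) x + 1 ≤ wdeg a g :=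
      fun x hx => tail_lt a hx
    rcases Finset.mem_union.mp (hsub he) with h1 | h2
    · rcases Finset.mem_union.mp h1 with h3 | h4
      · have := key F (g - G) (wdeg a f) (wdeg a g - 1) hFsup
          (fun x hx => by have := hgtail x hx; omega) h3
        have hg1 : 1 ≤ wdeg a g := by
          have hne : (g - G).support.Nonempty := by
            by_contra hcon
            rw [Finset.not_nonempty_iff_eq_empty, support_eq_empty] at hcon
            simp [hcon] at h3
          obtain ⟨x, hx⟩ := hne
          have := hgtail x hx; omega
        omega
      · have := key (f - F) G (wdeg a f - 1) (wdeg a g)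
          (fun x hx => by have := hftail x hx; omega) hGsup h4
        have hf1 : 1 ≤ wdeg a f := by
          have hne : (f - F).support.Nonempty := by
            by_contra hcon
            rw [Finset.not_nonempty_iff_eq_empty, support_eq_empty] at hcon
            simp [hcon] at h4
          obtain ⟨x, hx⟩ := hne
          have := hftail x hx; omega
        omega
    · have hne : (f - F).support.Nonempty ∧ (g - G).support.Nonempty := by
        constructor <;> by_contra hcon <;>
          rw [Finset.not_nonempty_iff_eq_empty, support_eq_empty] at hcon <;>
          simp [hcon] at h2
      obtain ⟨⟨x, hx⟩, ⟨y, hy⟩⟩ := hne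
      have hf1 : 1 ≤ wdeg a f := by have := hftail x hx; omega
      have hg1 : 1 ≤ wdeg a g := by have := hgtail y hy; omega
      have := key (f - F) (g - G) (wdeg a f - 1) (wdeg a g - 1)
        (fun x hx => by have := hftail x hx; omega)
        (fun y hy => by have := hgtail y hy; omega) h2
      omega
  rw [hfg]
  exact top_component a hFG hFG0 hqlt

lemma wdeg_sub_lt (f g : MvPolynomial (Fin n) K) (hfg : f ≠ g)
    (h1 : iniForm a g = iniForm a f) (h2 : wdeg a g = wdeg a f) :
    wdeg a (f - g) < wdeg a f := by
  have hsupp : ∀ e ∈ (f - g).support, (Finsupp.weight a) e < wdeg a f := by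
    intro e he
    rw [mem_support_iff, coeff_sub] at he
    rcases lt_trichotomy ((Finsupp.weight a) e) (wdeg a f) with h | h | h
    · exact h
    · exfalso
      have cf : coeff e f = coeff e (iniForm a f) := by
        rw [coeff_iniForm, if_pos h]
      have cg : coeff e g = coeff e (iniForm a g) := by
        rw [coeff_iniForm, if_pos (h2 ▸ h)]
      rw [cf, cg, h1] at he
      exact he (sub_self _)
    · exfalso
      have cf : coeff e f = 0 := by
        by_contra hc
        exact absurd (weight_le_wdeg a (mem_support_iff.mpr hc)) (not_le.mpr h)
      have cg : coeff e g = 0 := by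
        by_contra hc
        have := weight_le_wdeg a (mem_support_iff.mpr hc)
        omega
      rw [cf, cg] at he; exact he (sub_self _)
  obtain ⟨e, he⟩ := support_nonempty.mpr (sub_ne_zero_of_ne hfg)
  have hpos : 0 < wdeg a f := lt_of_le_of_lt (Nat.zero_le _) (hsupp e he)
  rw [wdeg_sup a (f - g)]
  exact Finset.sup_lt_iff (by simpa using hpos) |>.mpr hsupp

lemma compMul {s c : MvPolynomial (Fin n) K} {d D : ℕ}
    (hs : IsWeightedHomogeneous a s d) (hle : d ≤ D) :
    weightedHomogeneousComponent a D (c * s) =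
      weightedHomogeneousComponent a (D - d) c * s := by
  classical
  ext e
  rw [coeff_weightedHomogeneousComponent, coeff_mul, coeff_mul]
  by_cases h : (Finsupp.weight a) e = D
  · rw [if_pos h]
    apply Finset.sum_congr rfl
    intro x hx
    rw [Finset.HasAntidiagonal.mem_antidiagonal] at hx
    by_cases hsc : coeff x.2 s = 0
    · rw [hsc, mul_zero, mul_zero]
    · have hw2 : (Finsupp.weight a) x.2 = d := hs hsc
      have hw1 : (Finsupp.weight a) x.1 = D - d := by
        have : (Finsupp.weight a) x.1 + d = D := by rw [← hw2, ← map_add, hx, h]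
        omega
      rw [coeff_weightedHomogeneousComponent, if_pos hw1]
  · rw [if_neg h]
    symm
    apply Finset.sum_eq_zero
    intro x hx
    rw [Finset.HasAntidiagonal.mem_antidiagonal] at hx
    by_cases hsc : coeff x.2 s = 0
    · rw [hsc, mul_zero]
    · rw [coeff_weightedHomogeneousComponent, if_neg, zero_mul]
      intro hc
      apply h
      rw [← hx, map_add, hc, hs hsc]
      omega

lemma compMulHigh {s c : MvPolynomial (Fin n) K} {d D : ℕ}
    (hs : IsWeightedHomogeneous a s d) (hlt : D < d) :
    weightedHomogeneousComponent a D (c * s) = 0 := by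
  classical
  ext e
  rw [coeff_weightedHomogeneousComponent, coeff_mul, coeff_zero]
  split_ifs with h
  · apply Finset.sum_eq_zero
    intro x hx
    rw [Finset.HasAntidiagonal.mem_antidiagonal] at hx
    by_cases hsc : coeff x.2 s = 0
    · rw [hsc, mul_zero]
    · exfalso
      have hw2 : (Finsupp.weight a) x.2 = d := hs hsc
      have : (Finsupp.weight a) x.1 + d = D := by rw [← hw2, ← map_add, hx, h]
      omega
  · rfl

lemma lift_mem (I : Ideal (MvPolynomial (Fin n) K)) {f : MvPolynomial (Fin n) K} (hf : f ≠ 0)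
    (hp : iniForm a f ∈ iniFormIdeal a I) :
    ∃ g ∈ I, iniForm a g = iniForm a f ∧ wdeg a g = wdeg a f := by
  classical
  rw [iniFormIdeal, Ideal.span] at hp
  obtain ⟨m, c, v, hsum⟩ := Submodule.mem_span_set'.mp hp
  choose fi hfiI hfi using fun i => (v i).2
  set D := wdeg a f with hD
  set h : Fin m → MvPolynomial (Fin n) K := fun i =>
    if wdeg a (fi i) ≤ D then weightedHomogeneousComponent a (D - wdeg a (fi i)) (c i)
    else 0 with hh
  set g := ∑ i, h i * fi i with hg
  have hgI : g ∈ I := Ideal.sum_mem _ fun i _ => I.mul_mem_left _ (hfiI i)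
  set P := ∑ i, h i * iniForm a (fi i) with hP
  set Q := ∑ i, h i * (fi i - iniForm a (fi i)) with hQ
  have hPQ : g = P + Q := by
    rw [hg, hP, hQ, ← Finset.sum_add_distrib]
    exact Finset.sum_congr rfl fun i _ => by ring
  have hPf : P = iniForm a f := by
    have h1 : iniForm a f = weightedHomogeneousComponent a D (iniForm a f) :=
      ((iniForm_isWH a f).weightedHomogeneousComponent_same).symm
    rw [hP, h1, ← hsum, map_sum]
    apply Finset.sum_congr rfl
    intro i _
    rw [smul_eq_mul, hfi i]
    by_cases hle : wdeg a (fi i) ≤ D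
    · rw [compMul a (iniForm_isWH a (fi i)) hle, hh]
      simp only [if_pos hle]
    · rw [compMulHigh a (iniForm_isWH a (fi i)) (not_le.mp hle), hh]
      simp only [if_neg hle, zero_mul]
  have hQlt : ∀ e ∈ Q.support, (Finsupp.weight a) e < D := by
    intro e he
    have := MvPolynomial.support_sum he
    rw [Finset.mem_biUnion] at this
    obtain ⟨i, -, hei⟩ := this
    by_cases hle : wdeg a (fi i) ≤ D
    · have hhi : IsWeightedHomogeneous a (h i) (D - wdeg a (fi i)) := by
        rw [hh]; simp only [if_pos hle]
        exact weightedHomogeneousComponent_isWeightedHomogeneous _ _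
      have := support_mul _ _ hei
      rw [Finset.mem_add] at this
      obtain ⟨x, hx, y, hy, rfl⟩ := this
      have hwx : (Finsupp.weight a) x = D - wdeg a (fi i) := hhi (mem_support_iff.mp hx)
      have hwy : (Finsupp.weight a) y < wdeg a (fi i) := tail_lt a hy
      rw [map_add]
      omega
    · exfalso
      rw [hh] at hei
      simp only [if_neg hle, zero_mul, support_zero] at hei
      exact absurd hei (Finset.notMem_empty e)
  have := top_component a (hD ▸ iniForm_isWH a f) (iniForm_ne_zero a hf) hQlt
  refine ⟨g, hgI, ?_, ?_⟩
  · rw [hPQ, hPf]; exact this.2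
  · rw [hPQ, hPf]; exact this.1

lemma iniForm_mem (I : Ideal (MvPolynomial (Fin n) K)) {f : MvPolynomial (Fin n) K}
    (hf : f ∈ I) : iniForm a f ∈ iniFormIdeal a I :=
  Ideal.subset_span ⟨f, hf, rfl⟩

lemma iniForm_of_WH {p : MvPolynomial (Fin n) K} {D : ℕ}
    (hp : IsWeightedHomogeneous a p D) (hp0 : p ≠ 0) :
    iniForm a p = p ∧ wdeg a p = D := by
  have := top_component a (q := 0) hp hp0 (by simp)
  rw [add_zero] at this
  exact ⟨this.2, this.1⟩

lemma iniForm_pow {f : MvPolynomial (Fin n) K} (hf : f ≠ 0) (k : ℕ) (hk : k ≠ 0) :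
    iniForm a (f ^ k) = (iniForm a f) ^ k := by
  induction k with
  | zero => exact absurd rfl hk
  | succ k IH =>
    rcases Nat.eq_zero_or_pos k with hk0 | hkpos
    · subst hk0; rw [pow_one, pow_one]
    · rw [pow_succ, pow_succ, (iniForm_mul a (f ^ k) f (pow_ne_zero _ hf) hf).2,
        IH (by omega)]

theorem reduced_transfer (I : Ideal (MvPolynomial (Fin n) K))
    (hred : IsReduced (MvPolynomial (Fin n) K ⧸ iniFormIdeal a I)) :
    IsReduced (MvPolynomial (Fin n) K ⧸ I) := by
  have key : ∀ (k : ℕ), k ≠ 0 → ∀ (D : ℕ) (f : MvPolynomial (Fin n) K),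
      wdeg a f = D → f ^ k ∈ I → f ∈ I := by
    intro k hk D
    induction D using Nat.strong_induction_on with
    | _ D IH =>
      intro f hD hfk
      by_cases hf0 : f = 0
      · rw [hf0]; exact I.zero_mem
      have hini : iniForm a f ∈ iniFormIdeal a I := by
        have h1 : (iniForm a f) ^ k ∈ iniFormIdeal a I := by
          rw [← iniForm_pow a hf0 k hk]
          exact iniForm_mem a I hfk
        have h2 : IsNilpotent (Ideal.Quotient.mk (iniFormIdeal a I) (iniForm a f)) :=
          ⟨k, by rw [← map_pow, Ideal.Quotient.eq_zero_iff_mem]; exact h1⟩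
        rw [← Ideal.Quotient.eq_zero_iff_mem]
        exact IsReduced.eq_zero _ h2
      obtain ⟨g, hgI, hgini, hgdeg⟩ := lift_mem a I hf0 hini
      by_cases hfg : f = g
      · rw [hfg]; exact hgI
      · have hlt : wdeg a (f - g) < D := hD ▸ wdeg_sub_lt a f g hfg hgini hgdeg
        have hf'k : (f - g) ^ k ∈ I := by
          rw [← Ideal.Quotient.eq_zero_iff_mem, map_pow]
          have hmk : Ideal.Quotient.mk I (f - g) = Ideal.Quotient.mk I f := by
            rw [map_sub, (Ideal.Quotient.eq_zero_iff_mem).mpr hgI, sub_zero]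
          rw [hmk, ← map_pow, Ideal.Quotient.eq_zero_iff_mem]
          exact hfk
        have hmem : f - g ∈ I := IH _ hlt (f - g) rfl hf'k
        have := I.add_mem hmem hgI
        simpa using this
  constructor
  intro x hx
  obtain ⟨f, rfl⟩ := Ideal.Quotient.mk_surjective x
  obtain ⟨k, hk⟩ := hx
  by_cases hk0 : k = 0
  · subst hk0
    rw [pow_zero] at hk
    calc Ideal.Quotient.mk I f = Ideal.Quotient.mk I f * 1 := (mul_one _).symm
    _ = 0 := by rw [hk, mul_zero]
  · rw [← map_pow, Ideal.Quotient.eq_zero_iff_mem] at hk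
    rw [Ideal.Quotient.eq_zero_iff_mem]
    exact key k hk0 _ f rfl hk

theorem domain_transfer (I : Ideal (MvPolynomial (Fin n) K))
    (hdom : IsDomain (MvPolynomial (Fin n) K ⧸ iniFormIdeal a I)) :
    IsDomain (MvPolynomial (Fin n) K ⧸ I) := by
  have hne : I ≠ ⊤ := by
    intro htop
    have h1 : (1 : MvPolynomial (Fin n) K) ∈ I := htop ▸ Submodule.mem_top
    have h2 : iniForm a (1 : MvPolynomial (Fin n) K) ∈ iniFormIdeal a I :=
      iniForm_mem a I h1
    have hone : iniForm a (1 : MvPolynomial (Fin n) K) = 1 :=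
      (iniForm_of_WH a (isWeightedHomogeneous_one K a) one_ne_zero).1
    rw [hone, ← Ideal.Quotient.eq_zero_iff_mem] at h2
    rw [map_one] at h2
    exact one_ne_zero h2
  have key : ∀ (D : ℕ) (f g : MvPolynomial (Fin n) K),
      wdeg a f + wdeg a g = D → f * g ∈ I → f ∈ I ∨ g ∈ I := by
    intro D
    induction D using Nat.strong_induction_on with
    | _ D IH =>
      intro f g hD hfg
      by_cases hf0 : f = 0
      · left; rw [hf0]; exact I.zero_mem
      by_cases hg0 : g = 0
      · right; rw [hg0]; exact I.zero_mem
      have hmul := iniForm_mul a f g hf0 hg0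
      have hprod : iniForm a f * iniForm a g ∈ iniFormIdeal a I := by
        rw [← hmul.2]; exact iniForm_mem a I hfg
      have hzero : Ideal.Quotient.mk (iniFormIdeal a I) (iniForm a f) *
          Ideal.Quotient.mk (iniFormIdeal a I) (iniForm a g) = 0 := by
        rw [← map_mul, Ideal.Quotient.eq_zero_iff_mem]; exact hprod
      rcases mul_eq_zero.mp hzero with hcase | hcase <;>
        rw [Ideal.Quotient.eq_zero_iff_mem] at hcase
      · obtain ⟨g₀, hg₀I, h1, h2⟩ := lift_mem a I hf0 hcase
        by_cases hfe : f = g₀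
        · left; rw [hfe]; exact hg₀I
        · have hlt : wdeg a (f - g₀) + wdeg a g < D := by
            have := wdeg_sub_lt a f g₀ hfe h1 h2; omega
          have hmem : (f - g₀) * g ∈ I := by
            have hr : (f - g₀) * g = f * g - g₀ * g := by ring
            rw [hr]; exact I.sub_mem hfg (I.mul_mem_right _ hg₀I)
          rcases IH _ hlt (f - g₀) g rfl hmem with h | h
          · left
            have := I.add_mem h hg₀I
            simpa using this
          · right; exact h
      · obtain ⟨g₀, hg₀I, h1, h2⟩ := lift_mem a I hg0 hcase
        by_cases hge : g = g₀
        · right; rw [hge]; exact hg₀I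
        · have hlt : wdeg a f + wdeg a (g - g₀) < D := by
            have := wdeg_sub_lt a g g₀ hge h1 h2; omega
          have hmem : f * (g - g₀) ∈ I := by
            have hr : f * (g - g₀) = f * g - f * g₀ := by ring
            rw [hr]; exact I.sub_mem hfg (I.mul_mem_left _ hg₀I)
          rcases IH _ hlt f (g - g₀) rfl hmem with h | h
          · left; exact h
          · right
            have := I.add_mem h hg₀I
            simpa using this
  have hprime : I.IsPrime := ⟨hne, fun {x y} hxy => key _ x y rfl hxy⟩
  exact Ideal.Quotient.isDomain I

end IniProofAux

/-- If `R/in_a(I)` is reduced then so is `R/I`; if `R/in_a(I)` is a domain then so is `R/I`. -/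
theorem reduced_and_domain_transfer {K : Type*} [Field K] {n : ℕ} (a : Fin n → ℕ)
    (ha : ∀ i, 0 < a i) (I : Ideal (MvPolynomial (Fin n) K)) :
    (IsReduced (MvPolynomial (Fin n) K ⧸ iniFormIdeal a I) →
      IsReduced (MvPolynomial (Fin n) K ⧸ I)) ∧
    (IsDomain (MvPolynomial (Fin n) K ⧸ iniFormIdeal a I) →
      IsDomain (MvPolynomial (Fin n) K ⧸ I)) := by
  exact ⟨IniProofAux.reduced_transfer a I, IniProofAux.domain_transfer a I⟩
end

section
/- Let τ be a monomial order on K[X_1,...,X_n] and {(m_1,n_1),...,(m_k,n_k)} a finite set of pairs of monomials with m_i >_τ n_i for all i. Then there exists a positive integral weight vector a ∈ ℕ_+^n such that a(m_i) > a(n_i) for all i, where a(X^α) = Σ α_j a_j. -/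
open Finset

lemma exists_between_finsets (L U : Finset ℚ) (h : ∀ l ∈ L, ∀ u ∈ U, l < u) :
    ∃ t : ℚ, (∀ l ∈ L, l < t) ∧ ∀ u ∈ U, t < u := by
  rcases L.eq_empty_or_nonempty with hL | hL
  · rcases U.eq_empty_or_nonempty with hU | hU
    · exact ⟨0, by simp [hL], by simp [hU]⟩
    · exact ⟨U.min' hU - 1, by simp [hL],
        fun u hu => lt_of_lt_of_le (by linarith) (U.min'_le u hu)⟩
  · rcases U.eq_empty_or_nonempty with hU | hU
    · exact ⟨L.max' hL + 1, fun l hl => lt_of_le_of_lt (L.le_max' l hl) (by linarith), by simp [hU]⟩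
    · have hlt : L.max' hL < U.min' hU := h _ (L.max'_mem hL) _ (U.min'_mem hU)
      refine ⟨(L.max' hL + U.min' hU) / 2, fun l hl => ?_, fun u hu => ?_⟩
      · have := L.le_max' l hl; linarith
      · have := U.min'_le u hu; linarith

lemma sum_dite_subtype {ι : Type*} [Fintype ι] (p : ι → Prop) [DecidablePred p]
    (f : {i // p i} → ℚ) :
    ∑ i, (if h : p i then f ⟨i, h⟩ else 0) = ∑ x : {i // p i}, f x := by
  rw [← Finset.sum_filter_of_ne (s := Finset.univ)
    (p := p) (f := fun i => if h : p i then f ⟨i, h⟩ else 0)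
    (by intro x _ hx; by_contra hp; simp [hp] at hx)]
  rw [Finset.sum_subtype (p := p) (Finset.univ.filter p) (fun x => by simp)
    (fun i => if h : p i then f ⟨i, h⟩ else 0)]
  exact Finset.sum_congr rfl fun x _ => by simp [x.2]

theorem gordan : ∀ (n : ℕ) (ι : Type) [Fintype ι] (v : ι → Fin n → ℚ),
    (∃ a : Fin n → ℚ, ∀ i, 0 < ∑ j, v i j * a j) ∨
    (∃ c : ι → ℚ, (∀ i, 0 ≤ c i) ∧ (∃ i, c i ≠ 0) ∧ ∀ j, ∑ i, c i * v i j ≤ 0) := by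
  intro n
  induction n with
  | zero =>
    intro ι _ v
    rcases isEmpty_or_nonempty ι with h | h
    · exact Or.inl ⟨0, fun i => isEmptyElim i⟩
    · exact Or.inr ⟨fun _ => 1, fun _ => zero_le_one, ⟨h.some, one_ne_zero⟩, fun j => j.elim0⟩
  | succ n ih =>
    intro ι _ v
    classical
    set b : ι → ℚ := fun i => v i (Fin.last n) with hb
    set w : ι → Fin n → ℚ := fun i j => v i j.castSucc with hw
    set u : ({i : ι // b i = 0} ⊕ ({i : ι // 0 < b i} × {i : ι // b i < 0})) → Fin n → ℚ :=
      fun x => Sum.rec (fun z => w z.1)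
        (fun pq => fun j => b pq.1.1 * w pq.2.1 j - b pq.2.1 * w pq.1.1 j) x with hu
    rcases ih _ u with ⟨a', ha'⟩ | ⟨c', hc0, ⟨i₀, hi₀⟩, hcle⟩
    · -- feasible case
      set x : ι → ℚ := fun i => ∑ j, w i j * a' j with hx
      have hZ : ∀ i, b i = 0 → 0 < x i := fun i h => ha' (.inl ⟨i, h⟩)
      have hPN : ∀ p q : ι, 0 < b p → b q < 0 → 0 < b p * x q - b q * x p := by
        intro p q hp hq
        have h1 := ha' (.inr (⟨p, hp⟩, ⟨q, hq⟩))
        simpa [hu, hx, sub_mul, Finset.sum_sub_distrib, mul_assoc, ← Finset.mul_sum] using h1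
      obtain ⟨t, htL, htU⟩ := exists_between_finsets
        ((Finset.univ.filter (fun i => 0 < b i)).image (fun i => -x i / b i))
        ((Finset.univ.filter (fun i => b i < 0)).image (fun i => -x i / b i)) (by
          simp only [Finset.mem_image, Finset.mem_filter, Finset.mem_univ, true_and]
          rintro _ ⟨p, hp, rfl⟩ _ ⟨q, hq, rfl⟩
          have h2 := hPN p q hp hq
          have hq' : 0 < -b q := by linarith
          rw [show -x q / b q = x q / (-b q) by rw [div_neg, neg_div],
            div_lt_div_iff₀ hp hq']
          nlinarith)
      refine Or.inl ⟨(Fin.snoc a' t : Fin (n+1) → ℚ), fun i => ?_⟩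
      have hsum : ∑ j : Fin (n+1), v i j * (Fin.snoc a' t : Fin (n+1) → ℚ) j = x i + b i * t := by
        rw [Fin.sum_univ_castSucc]
        simp [hx, hw, hb]
      rw [hsum]
      rcases lt_trichotomy (b i) 0 with hbi | hbi | hbi
      · have ht : t < -x i / b i := htU _ (Finset.mem_image_of_mem _ (by simp [hbi]))
        rw [lt_div_iff_of_neg hbi] at ht
        nlinarith
      · have := hZ i hbi; rw [hbi]; linarith
      · have ht : -x i / b i < t := htL _ (Finset.mem_image_of_mem _ (by simp [hbi]))
        rw [div_lt_iff₀ hbi] at ht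
        nlinarith
    · -- infeasible case: transfer certificate
      set c : ι → ℚ := fun i =>
        (if h : b i = 0 then c' (.inl ⟨i, h⟩) else 0)
        + (if h : 0 < b i then ∑ q : {i : ι // b i < 0}, c' (.inr (⟨i, h⟩, q)) * (-b q.1) else 0)
        + (if h : b i < 0 then ∑ p : {i : ι // 0 < b i}, c' (.inr (p, ⟨i, h⟩)) * b p.1 else 0)
        with hc
      have hnn : ∀ i, 0 ≤ c i := by
        intro i
        have h1 : (0:ℚ) ≤ if h : b i = 0 then c' (.inl ⟨i, h⟩) else 0 := by
          split_ifs; exacts [hc0 _, le_refl 0]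
        have h2 : (0:ℚ) ≤ if h : 0 < b i then
            ∑ q : {i : ι // b i < 0}, c' (.inr (⟨i, h⟩, q)) * (-b q.1) else 0 := by
          split_ifs
          · exact Finset.sum_nonneg fun q _ => mul_nonneg (hc0 _) (by have := q.2; linarith)
          · exact le_refl 0
        have h3 : (0:ℚ) ≤ if h : b i < 0 then
            ∑ p : {i : ι // 0 < b i}, c' (.inr (p, ⟨i, h⟩)) * b p.1 else 0 := by
          split_ifs
          · exact Finset.sum_nonneg fun p _ => mul_nonneg (hc0 _) (le_of_lt p.2)
          · exact le_refl 0
        rw [hc]; dsimp only; linarith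
      have hkey : ∀ g : ι → ℚ, ∑ i, c i * g i
          = (∑ z : {i : ι // b i = 0}, c' (.inl z) * g z.1)
            + ∑ p : {i : ι // 0 < b i}, ∑ q : {i : ι // b i < 0},
                c' (.inr (p, q)) * (b p.1 * g q.1 - b q.1 * g p.1) := by
        intro g
        have e1 : ∑ i, c i * g i
            = (∑ i, if h : b i = 0 then c' (.inl ⟨i, h⟩) * g i else 0)
              + ((∑ i, if h : 0 < b i then
                    (∑ q : {i : ι // b i < 0}, c' (.inr (⟨i, h⟩, q)) * (-b q.1)) * g i else 0)
                + (∑ i, if h : b i < 0 then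
                    (∑ p : {i : ι // 0 < b i}, c' (.inr (p, ⟨i, h⟩)) * b p.1) * g i else 0)) := by
          rw [← Finset.sum_add_distrib, ← Finset.sum_add_distrib]
          refine Finset.sum_congr rfl fun i _ => ?_
          rw [hc]; dsimp only; split_ifs <;> ring
        rw [e1, sum_dite_subtype (fun i => b i = 0) (fun z => c' (.inl z) * g z.1),
          sum_dite_subtype (fun i => 0 < b i)
            (fun p => (∑ q : {i : ι // b i < 0}, c' (.inr (p, q)) * (-b q.1)) * g p.1),
          sum_dite_subtype (fun i => b i < 0)
            (fun q => (∑ p : {i : ι // 0 < b i}, c' (.inr (p, q)) * b p.1) * g q.1)]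
        congr 1
        have e2 : ∑ p : {i : ι // 0 < b i},
              (∑ q : {i : ι // b i < 0}, c' (.inr (p, q)) * (-b q.1)) * g p.1
            = ∑ p : {i : ι // 0 < b i}, ∑ q : {i : ι // b i < 0},
                c' (.inr (p, q)) * (-b q.1) * g p.1 := by
          refine Finset.sum_congr rfl fun p _ => ?_
          rw [Finset.sum_mul]
        have e3 : ∑ q : {i : ι // b i < 0},
              (∑ p : {i : ι // 0 < b i}, c' (.inr (p, q)) * b p.1) * g q.1
            = ∑ p : {i : ι // 0 < b i}, ∑ q : {i : ι // b i < 0},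
                c' (.inr (p, q)) * b p.1 * g q.1 := by
          rw [Finset.sum_comm]
          refine Finset.sum_congr rfl fun q _ => ?_
          rw [Finset.sum_mul]
        rw [e2, e3, ← Finset.sum_add_distrib]
        refine Finset.sum_congr rfl fun p _ => ?_
        rw [← Finset.sum_add_distrib]
        exact Finset.sum_congr rfl fun q _ => by ring
      have hjc : ∀ j : Fin n, ∑ i, c i * w i j ≤ 0 := by
        intro j
        have e4 : ∑ i, c i * w i j
            = ∑ x : ({i : ι // b i = 0} ⊕ ({i : ι // 0 < b i} × {i : ι // b i < 0})),
                c' x * u x j := by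
          rw [hkey (fun i => w i j), Fintype.sum_sum_type, Fintype.sum_prod_type]
        rw [e4]; exact hcle j
      have hlast : ∑ i, c i * b i = 0 := by
        rw [hkey b]
        have z1 : ∑ z : {i : ι // b i = 0}, c' (.inl z) * b z.1 = 0 :=
          Finset.sum_eq_zero fun z _ => by rw [z.2, mul_zero]
        have z2 : ∑ p : {i : ι // 0 < b i}, ∑ q : {i : ι // b i < 0},
            c' (.inr (p, q)) * (b p.1 * b q.1 - b q.1 * b p.1) = 0 :=
          Finset.sum_eq_zero fun p _ => Finset.sum_eq_zero fun q _ => by ring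
        rw [z1, z2, add_zero]
      refine Or.inr ⟨c, hnn, ?_, ?_⟩
      · rcases i₀ with z | ⟨p, q⟩
        · refine ⟨z.1, ?_⟩
          have : c z.1 = c' (.inl z) := by
            rw [hc]; dsimp only
            rw [dif_pos z.2, dif_neg (by rw [z.2]; exact lt_irrefl 0),
              dif_neg (by rw [z.2]; exact lt_irrefl 0)]
            simp
          rw [this]; exact hi₀
        · refine ⟨p.1, ?_⟩
          have hpos : 0 < c p.1 := by
            have : c p.1 = ∑ q' : {i : ι // b i < 0},
                c' (.inr (p, q')) * (-b q'.1) := by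
              rw [hc]; dsimp only
              rw [dif_neg p.2.ne', dif_pos p.2, dif_neg (asymm p.2)]
              simp
            rw [this]
            refine Finset.sum_pos' (fun q' _ => mul_nonneg (hc0 _) (by have := q'.2; linarith))
              ⟨q, Finset.mem_univ q, ?_⟩
            have h5 : 0 < c' (.inr (p, q)) := lt_of_le_of_ne (hc0 _) (Ne.symm hi₀)
            have h6 : (0:ℚ) < -b q.1 := by have := q.2; linarith
            exact mul_pos h5 h6
          exact hpos.ne'
      · intro j
        refine Fin.lastCases ?_ ?_ j
        · exact le_of_eq hlast
        · intro j'
          exact hjc j'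

lemma exists_nat_scaling {ι : Type*} [Fintype ι] (a : ι → ℚ) (ha : ∀ i, 0 ≤ a i) :
    ∃ (d : ι → ℕ) (D : ℕ), 0 < D ∧ ∀ i, (d i : ℚ) = (D : ℚ) * a i := by
  classical
  refine ⟨fun i => (a i).num.toNat * ∏ i' ∈ Finset.univ.erase i, (a i').den,
    ∏ i, (a i).den, Finset.prod_pos fun i _ => (a i).pos, fun i => ?_⟩
  have h1 : (∏ i, ((a i).den) : ℕ) = (a i).den * ∏ i' ∈ Finset.univ.erase i, (a i').den :=
    (Finset.mul_prod_erase Finset.univ _ (Finset.mem_univ i)).symm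
  have h2 : a i * ((a i).den : ℚ) = (a i).num := Rat.mul_den_eq_num _
  push_cast [h1, Int.toNat_of_nonneg (Rat.num_nonneg.mpr (ha i))]
  rw [mul_comm ((a i).den : ℚ) (∏ i' ∈ Finset.univ.erase i, ((a i').den : ℚ)), mul_assoc,
    mul_comm ((a i).den : ℚ) (a i), h2]
  have h3 : (((a i).num.toNat : ℕ) : ℚ) = ((a i).num : ℚ) := by
    exact_mod_cast congrArg (fun z : ℤ => (z : ℚ)) (Int.toNat_of_nonneg (Rat.num_nonneg.mpr (ha i)))
  rw [h3]
  ring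

/-- Given a monomial order `τ` and finitely many pairs of monomials `(m_i, n_i)` with
`m_i >_τ n_i`, there is a positive integral weight vector `a` with `a(m_i) > a(n_i)` for
all `i`. -/
theorem exists_weight_vector {n k : ℕ} (m : MonomialOrder (Fin n))
    (M N : Fin k → (Fin n →₀ ℕ)) (h : ∀ i, m.toSyn (N i) < m.toSyn (M i)) :
    ∃ a : Fin n → ℕ, (∀ j, 0 < a j) ∧
      ∀ i, (∑ j, a j * N i j) < ∑ j, a j * M i j := by
  classical
  set v : (Fin k ⊕ Fin n) → Fin n → ℚ := fun x j =>
    Sum.rec (fun i => (M i j : ℚ) - (N i j : ℚ)) (fun j0 => if j = j0 then 1 else 0) x with hv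
  rcases gordan n (Fin k ⊕ Fin n) v with ⟨a, hA⟩ | ⟨c, hc0, ⟨x₀, hx₀⟩, hle⟩
  · -- feasible: extract natural weights
    have hapos : ∀ j0, 0 < a j0 := by
      intro j0
      have h1 := hA (.inr j0)
      simpa [hv, ite_mul, Finset.sum_ite_eq'] using h1
    obtain ⟨d, D, hD, hdD⟩ := exists_nat_scaling a (fun j => (hapos j).le)
    refine ⟨d, fun j => ?_, fun i => ?_⟩
    · have hpos : (0:ℚ) < (D:ℚ) * a j :=
        mul_pos (by exact_mod_cast hD) (hapos j)
      by_contra hj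
      push_neg at hj
      have hdj : d j = 0 := Nat.le_zero.mp hj
      rw [← hdD j, hdj] at hpos
      simp at hpos
    · have h1 := hA (.inl i)
      have h1' : (0:ℚ) < ∑ j, ((M i j : ℚ) - (N i j : ℚ)) * a j := h1
      have h2 : (∑ j, (d j : ℚ) * (N i j : ℚ)) < ∑ j, (d j : ℚ) * (M i j : ℚ) := by
        rw [← sub_pos, ← Finset.sum_sub_distrib]
        have e : ∀ j, (d j:ℚ) * (M i j : ℚ) - (d j:ℚ) * (N i j : ℚ)
            = (D:ℚ) * (((M i j : ℚ) - (N i j : ℚ)) * a j) := fun j => by rw [hdD j]; ring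
        rw [Finset.sum_congr rfl (fun j _ => e j), ← Finset.mul_sum]
        exact mul_pos (by exact_mod_cast hD) h1'
      exact_mod_cast h2
  · -- certificate: contradiction with the monomial order
    exfalso
    set γ : Fin k → ℚ := fun i => c (.inl i) with hγdef
    have hsplit : ∀ j, (∑ i, γ i * ((M i j : ℚ) - (N i j : ℚ))) + c (.inr j) ≤ 0 := by
      intro j
      have h1 := hle j
      rw [Fintype.sum_sum_type] at h1
      have e2 : ∑ j0 : Fin n, c (.inr j0) * v (.inr j0) j = c (.inr j) := by
        simp [hv, mul_ite, Finset.sum_ite_eq]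
      rw [e2] at h1
      exact h1
    by_cases hγ : ∀ i, γ i = 0
    · have hzero : ∀ j, c (.inr j) = 0 := by
        intro j
        have h1 := hsplit j
        simp only [hγ, zero_mul, Finset.sum_const_zero, zero_add] at h1
        exact le_antisymm h1 (hc0 _)
      cases x₀ with
      | inl i => exact hx₀ (hγ i)
      | inr j => exact hx₀ (hzero j)
    · push_neg at hγ
      obtain ⟨i₀, hi₀⟩ := hγ
      have hγ0 : ∀ i, 0 ≤ γ i := fun i => hc0 (.inl i)
      obtain ⟨d, D, hD, hdD⟩ := exists_nat_scaling γ hγ0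
      have hd₀ : 0 < d i₀ := by
        have hpos : (0:ℚ) < (D:ℚ) * γ i₀ :=
          mul_pos (by exact_mod_cast hD) (lt_of_le_of_ne (hγ0 i₀) (Ne.symm hi₀))
        rw [← hdD i₀] at hpos
        exact_mod_cast hpos
      have hcomp : ∀ j, (∑ i, d i * M i j) ≤ ∑ i, d i * N i j := by
        intro j
        have h3 := hsplit j
        have h6 : (0:ℚ) ≤ c (.inr j) := hc0 _
        have h7 : ∑ i, γ i * ((M i j : ℚ) - (N i j : ℚ)) ≤ 0 := by linarith
        have h5 : (∑ i, (d i:ℚ) * (M i j : ℚ)) - ∑ i, (d i:ℚ) * (N i j : ℚ)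
            = (D:ℚ) * ∑ i, γ i * ((M i j : ℚ) - (N i j : ℚ)) := by
          rw [← Finset.sum_sub_distrib, Finset.mul_sum]
          exact Finset.sum_congr rfl fun i _ => by rw [hdD i]; ring
        have h8 : (0:ℚ) ≤ (D:ℚ) := by positivity
        have h9 : (∑ i, (d i:ℚ) * (M i j : ℚ)) ≤ ∑ i, (d i:ℚ) * (N i j : ℚ) := by
          nlinarith [mul_nonpos_of_nonneg_of_nonpos h8 h7]
        exact_mod_cast h9
      have hAB : (∑ i, d i • M i) ≤ ∑ i, d i • N i := by
        rw [Finsupp.le_def]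
        intro j
        have eA : (∑ i, d i • M i) j = ∑ i, d i * M i j := by
          rw [Finset.sum_apply']
          exact Finset.sum_congr rfl fun i _ => rfl
        have eB : (∑ i, d i • N i) j = ∑ i, d i * N i j := by
          rw [Finset.sum_apply']
          exact Finset.sum_congr rfl fun i _ => rfl
        rw [eA, eB]
        exact hcomp j
      have h7 : m.toSyn (∑ i, d i • M i) ≤ m.toSyn (∑ i, d i • N i) :=
        m.toSyn_monotone hAB
      have h8 : m.toSyn (∑ i, d i • N i) < m.toSyn (∑ i, d i • M i) := by
        rw [map_sum, map_sum]
        have eM : ∀ i, m.toSyn (d i • M i) = d i • m.toSyn (M i) := fun i => map_nsmul _ _ _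
        have eN : ∀ i, m.toSyn (d i • N i) = d i • m.toSyn (N i) := fun i => map_nsmul _ _ _
        rw [Finset.sum_congr rfl (fun i _ => eM i), Finset.sum_congr rfl (fun i _ => eN i)]
        exact Finset.sum_lt_sum (fun i _ => nsmul_le_nsmul_right (h i).le _)
          ⟨i₀, Finset.mem_univ _, nsmul_lt_nsmul_right hd₀.ne' (h i₀)⟩
      exact absurd h7 (not_le.mpr h8)
end
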